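/- arXiv:1808.09437 — 6 statements merged into one kernel-verified Lean document; each statement's English description precedes it below -/
import Mathlib

section
/- Let r ≥ 2 be even and γ, ψ > 0 with γ ≤ ψ. Define R_r(γ, ψ) = ∑_{k=1}^{r/2} S(r,k) γ^{2k} ψ^{r−2k}, where S(r,k) is the Stirling number of the second kind. Then R_r(γ, ψ)^{1/r} ≤ max(2r / (1 + 2 log(ψ/γ)), 2) · ψ. -/
/-- Stirling numbers of the second kind. -/
def stirling : ℕ → ℕ → ℕ
  | 0, 0 => 1
  | 0, _ + 1 => 0
  | _ + 1, 0 => 0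
  | n + 1, k + 1 => (k + 1) * stirling n (k + 1) + stirling n k

lemma stirling_le (n k : ℕ) : stirling n k ≤ n.choose k * k ^ (n - k) := by
  induction n generalizing k with
  | zero =>
    match k with
    | 0 => simp [stirling]
    | k + 1 => simp [stirling]
  | succ n ih =>
    match k with
    | 0 => simp [stirling]
    | k + 1 =>
      rw [stirling, Nat.choose_succ_succ', Nat.succ_sub_succ]
      rcases le_or_gt (k + 1) n with h | h
      · calc (k + 1) * stirling n (k + 1) + stirling n k
            ≤ (k + 1) * (n.choose (k + 1) * (k + 1) ^ (n - (k + 1)))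
              + n.choose k * k ^ (n - k) := by gcongr <;> [exact ih (k+1); exact ih k]
          _ ≤ n.choose (k + 1) * (k + 1) ^ (n - k) + n.choose k * (k + 1) ^ (n - k) := by
              have he : (k + 1) * (n.choose (k + 1) * (k + 1) ^ (n - (k + 1)))
                  = n.choose (k + 1) * (k + 1) ^ (n - k) := by
                have h2 : n - (k + 1) + 1 = n - k := by omega
                rw [← h2, pow_succ]; ring
              rw [he]
              gcongr
              exact Nat.le_succ k
          _ = (n.choose k + n.choose (k + 1)) * (k + 1) ^ (n - k) := by ring
      · have h1 : stirling n (k + 1) = 0 := by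
          have := ih (k + 1)
          rwa [Nat.choose_eq_zero_of_lt h, zero_mul, Nat.le_zero] at this
        rw [h1, mul_zero, zero_add]
        calc stirling n k ≤ n.choose k * k ^ (n - k) := ih k
          _ ≤ (n.choose k + n.choose (k+1)) * (k + 1) ^ (n - k) := by
              gcongr <;> [omega; exact Nat.le_succ k]

lemma keyB (K R a : ℝ) (hK : 1 ≤ K) (hKR : 2 * K ≤ R) (ha : 1 ≤ a) (har : a ≤ R) :
    (R - K) * Real.log K - K * (a - 1) ≤ R * (Real.log R - Real.log a) := by
  have hK0 : 0 < K := by linarith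
  have hR0 : 0 < R := by linarith
  have ha0 : 0 < a := by linarith
  have h1 : Real.log (K * a / R) ≤ K * a / R - 1 :=
    Real.log_le_sub_one_of_pos (by positivity)
  have h2 : Real.log (K * a / R) = Real.log K + Real.log a - Real.log R := by
    rw [Real.log_div (by positivity) hR0.ne', Real.log_mul hK0.ne' ha0.ne']
  rw [h2] at h1
  have hm : R * (Real.log K + Real.log a - Real.log R) ≤ K * a - R := by
    have := mul_le_mul_of_nonneg_left h1 hR0.le
    calc R * (Real.log K + Real.log a - Real.log R) ≤ R * (K * a / R - 1) := this
      _ = K * a - R := by field_simp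
  have h3 : 0 ≤ K * Real.log K := mul_nonneg hK0.le (Real.log_nonneg hK)
  nlinarith [hm, h3, hKR]

lemma keyA (K R a : ℝ) (hK : 1 ≤ K) (hKR : 2 * K ≤ R) (har : R ≤ a) :
    (R - K) * Real.log K ≤ K * (a - 1) := by
  have hK0 : 0 < K := by linarith
  have hlog : Real.log K ≤ K - 1 := Real.log_le_sub_one_of_pos hK0
  have hlog0 : 0 ≤ Real.log K := Real.log_nonneg hK
  nlinarith [sq_nonneg (K - 1), mul_le_mul_of_nonneg_left hlog (by linarith : (0:ℝ) ≤ R - K)]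

lemma key_exp (r k : ℕ) (hk1 : 1 ≤ k) (hk2 : 2 * k ≤ r) (t L M : ℝ) (ht : 0 < t)
    (hLt : Real.log t = -L) (hL : 0 ≤ L) (hM2 : 2 ≤ M)
    (hMr : 2 * r / (1 + 2 * L) ≤ M) :
    (k : ℝ) ^ (r - k) * t ^ (2 * k) ≤ (M / 2) ^ r := by
  have hK1 : (1 : ℝ) ≤ (k : ℝ) := by exact_mod_cast hk1
  have hK0 : (0 : ℝ) < (k : ℝ) := by linarith
  have hKR : 2 * (k : ℝ) ≤ (r : ℝ) := by exact_mod_cast hk2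
  have hR0 : (0 : ℝ) < (r : ℝ) := by linarith
  have ha1 : (1 : ℝ) ≤ 1 + 2 * L := by linarith
  have ha0 : (0 : ℝ) < 1 + 2 * L := by linarith
  have hX0 : 0 < (k : ℝ) ^ (r - k) * t ^ (2 * k) := by positivity
  have hcast : ((r - k : ℕ) : ℝ) = (r : ℝ) - (k : ℝ) := by
    rw [Nat.cast_sub (by omega)]
  have hlogX : Real.log ((k : ℝ) ^ (r - k) * t ^ (2 * k))
      = ((r : ℝ) - k) * Real.log k - (2 * k) * L := by
    rw [Real.log_mul (by positivity) (by positivity), Real.log_pow, Real.log_pow, hLt,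
      hcast]
    push_cast
    ring
  rcases le_total (1 + 2 * L) (r : ℝ) with har | har
  · have hstep : (k : ℝ) ^ (r - k) * t ^ (2 * k) ≤ ((r : ℝ) / (1 + 2 * L)) ^ r := by
      have hY0 : (0 : ℝ) < ((r : ℝ) / (1 + 2 * L)) ^ r := by positivity
      rw [← Real.exp_log hX0, ← Real.exp_log hY0]
      apply Real.exp_le_exp.mpr
      rw [hlogX, Real.log_pow, Real.log_div hR0.ne' ha0.ne']
      have := keyB (k : ℝ) (r : ℝ) (1 + 2 * L) hK1 hKR ha1 har
      nlinarith [this]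
    refine hstep.trans (pow_le_pow_left₀ (by positivity) ?_ r)
    rw [div_le_div_iff₀ ha0 (by norm_num : (0:ℝ) < 2)] at *
    rw [div_le_iff₀ ha0] at hMr
    linarith
  · have hstep : (k : ℝ) ^ (r - k) * t ^ (2 * k) ≤ 1 := by
      rw [← Real.exp_log hX0, ← Real.exp_zero]
      apply Real.exp_le_exp.mpr
      rw [hlogX]
      have := keyA (k : ℝ) (r : ℝ) (1 + 2 * L) hK1 hKR har
      nlinarith [this]
    refine hstep.trans (one_le_pow₀ ?_)
    linarith

/-- For even `r ≥ 2` and `0 < γ ≤ ψ`, with `R_r(γ,ψ) = ∑_{k=1}^{r/2} S(r,k) γ^{2k} ψ^{r−2k}`,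
we have `R_r(γ,ψ)^{1/r} ≤ max (2r / (1 + 2 log(ψ/γ))) 2 * ψ`. -/
theorem stmt_8 (r : ℕ) (hr : Even r) (hr2 : 2 ≤ r) (γ ψ : ℝ) (hγ : 0 < γ) (hγψ : γ ≤ ψ) :
    (∑ k ∈ Finset.Icc 1 (r / 2), (stirling r k : ℝ) * γ ^ (2 * k) * ψ ^ (r - 2 * k))
        ^ ((1 : ℝ) / r)
      ≤ max ((2 * r : ℝ) / (1 + 2 * Real.log (ψ / γ))) 2 * ψ := by
  have hψ : 0 < ψ := lt_of_lt_of_le hγ hγψ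
  set L := Real.log (ψ / γ) with hLdef
  have hL : 0 ≤ L := Real.log_nonneg (by rw [le_div_iff₀ hγ]; linarith)
  set M := max ((2 * r : ℝ) / (1 + 2 * L)) 2 with hM
  have hM2 : (2 : ℝ) ≤ M := le_max_right _ _
  have hM0 : 0 < M := by linarith
  have hlogt : Real.log (γ / ψ) = -L := by
    rw [hLdef, ← Real.log_inv, inv_div]
  -- per-term bound
  have key : ∀ k ∈ Finset.Icc 1 (r / 2),
      (stirling r k : ℝ) * γ ^ (2 * k) * ψ ^ (r - 2 * k)
        ≤ (r.choose k : ℝ) * ((M / 2) ^ r * ψ ^ r) := by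
    intro k hk
    simp only [Finset.mem_Icc] at hk
    have hk1 : 1 ≤ k := hk.1
    have hk2 : 2 * k ≤ r := by omega
    have hs : (stirling r k : ℝ) ≤ (r.choose k : ℝ) * (k : ℝ) ^ (r - k) := by
      exact_mod_cast stirling_le r k
    have hsplit : γ ^ (2 * k) * ψ ^ (r - 2 * k) = (γ / ψ) ^ (2 * k) * ψ ^ r := by
      rw [div_pow, div_mul_eq_mul_div, eq_div_iff (by positivity), mul_assoc, ← pow_add]
      congr 2
      omega
    have hX := key_exp r k hk1 hk2 (γ / ψ) L M (by positivity) hlogt hL hM2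
      (le_max_left _ _)
    calc (stirling r k : ℝ) * γ ^ (2 * k) * ψ ^ (r - 2 * k)
        ≤ ((r.choose k : ℝ) * (k : ℝ) ^ (r - k)) * (γ ^ (2 * k) * ψ ^ (r - 2 * k)) := by
          rw [mul_assoc]
          exact mul_le_mul_of_nonneg_right hs (by positivity)
      _ = (r.choose k : ℝ) * (((k : ℝ) ^ (r - k) * (γ / ψ) ^ (2 * k)) * ψ ^ r) := by
          rw [hsplit]; ring
      _ ≤ (r.choose k : ℝ) * ((M / 2) ^ r * ψ ^ r) := by
          gcongr
  have hchoose : (∑ k ∈ Finset.Icc 1 (r / 2), (r.choose k : ℝ)) ≤ 2 ^ r := by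
    have h1 : (∑ k ∈ Finset.Icc 1 (r / 2), r.choose k) ≤ ∑ k ∈ Finset.range (r + 1), r.choose k := by
      apply Finset.sum_le_sum_of_subset
      intro x hx
      simp only [Finset.mem_Icc] at hx
      simp only [Finset.mem_range]
      omega
    rw [Nat.sum_range_choose] at h1
    exact_mod_cast (Nat.cast_le (α := ℝ)).mpr h1
  have hsum : (∑ k ∈ Finset.Icc 1 (r / 2), (stirling r k : ℝ) * γ ^ (2 * k) * ψ ^ (r - 2 * k))
      ≤ (M * ψ) ^ r := by
    calc (∑ k ∈ Finset.Icc 1 (r / 2), (stirling r k : ℝ) * γ ^ (2 * k) * ψ ^ (r - 2 * k))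
        ≤ ∑ k ∈ Finset.Icc 1 (r / 2), (r.choose k : ℝ) * ((M / 2) ^ r * ψ ^ r) :=
          Finset.sum_le_sum key
      _ = (∑ k ∈ Finset.Icc 1 (r / 2), (r.choose k : ℝ)) * ((M / 2) ^ r * ψ ^ r) := by
          rw [← Finset.sum_mul]
      _ ≤ 2 ^ r * ((M / 2) ^ r * ψ ^ r) := by
          apply mul_le_mul_of_nonneg_right hchoose (by positivity)
      _ = (M * ψ) ^ r := by
          rw [div_pow, mul_pow]
          field_simp
  have hS0 : 0 ≤ ∑ k ∈ Finset.Icc 1 (r / 2), (stirling r k : ℝ) * γ ^ (2 * k) * ψ ^ (r - 2 * k) := by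
    apply Finset.sum_nonneg
    intro k _
    positivity
  have hfin : ((M * ψ) ^ r : ℝ) ^ ((1 : ℝ) / r) = M * ψ := by
    have hr0 : ((r : ℝ)) ≠ 0 := by positivity
    rw [← Real.rpow_natCast (M * ψ) r, ← Real.rpow_mul (by positivity)]
    rw [mul_one_div, div_self hr0, Real.rpow_one]
  calc (∑ k ∈ Finset.Icc 1 (r / 2), (stirling r k : ℝ) * γ ^ (2 * k) * ψ ^ (r - 2 * k))
        ^ ((1 : ℝ) / r)
      ≤ ((M * ψ) ^ r) ^ ((1 : ℝ) / r) := Real.rpow_le_rpow hS0 hsum (by positivity)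
    _ = M * ψ := hfin
end

section
/- (Linear large deviation bound for sparse vectors) Let r ≥ 2 be even, 1 ≤ q ≤ √N, and let X₁,…,X_N be independent complex random variables with E X_i = 0 and E|X_i|^k ≤ 1/(N q^{k−2}) for all 2 ≤ k ≤ r. Let a₁,…,a_N ∈ ℂ satisfy ((1/N)∑_i |a_i|²)^{1/2} ≤ γ and (max_i |a_i|)/q ≤ ψ. Then the L^r norm satisfies ‖∑_i a_i X_i‖_r ≤ (max(2r/(1 + 2(log(ψ/γ))₊), 2)) · max(γ, ψ). -/
/-!
Write `Z = ∑ aᵢ Xᵢ` and `r = 2p`. Expanding `|Z|^r = Z^p · conj(Z)^p` gives a sum of monomials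
indexed by maps `d : {1,…,r} → {1,…,N}`. By independence the expectation of a monomial factors
over the fibres of `d`: a fibre of size one contributes `0` (the `Xᵢ` are centered), a fibre of
size `c ≥ 2` at most `ψ^(c-2) |aᵢ|²/N`. Grouping the surviving `d` by their image `S` (so
`|S| = u ≤ p`, and at most `u^r` maps have image `S`) yields
`E|Z|^r ≤ ∑_{u ≤ p} u^r γ^(2u) ψ^(r-2u)`. Writing `γ ≤ max(γ,ψ) e^(-L)` with
`L = (log(ψ/γ))₊` and using that `x^r e^(-x)` is largest at `x = r`, each term is at most
`(r max(γ,ψ)/(1+2L))^r`; the `p + 1 ≤ 2^r` terms account for the factor `2`.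
-/

open MeasureTheory ProbabilityTheory Finset Real

lemma pow_le_pow_mul_exp_sub {x : ℝ} (hx : 0 ≤ x) (r : ℕ) : x ^ r ≤ r ^ r * exp (x - r) := by
  rcases Nat.eq_zero_or_pos r with rfl | hr
  · simpa using one_le_exp hx
  have hr' : (0 : ℝ) < r := by exact_mod_cast hr
  have h : x / r ≤ exp (x / r - 1) := by linarith [add_one_le_exp (x / r - 1)]
  calc x ^ r = r ^ r * (x / r) ^ r := by rw [div_pow, mul_div_cancel₀ _ (by positivity)]
    _ ≤ r ^ r * exp (x / r - 1) ^ r := by gcongr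
    _ = r ^ r * exp (x - r) := by rw [← exp_nat_mul]; congr 2; field_simp

lemma pow_mul_exp_neg_le {u L : ℝ} (hu : 0 ≤ u) (hL : 0 ≤ L) {r : ℕ} (hur : u ≤ r) :
    u ^ r * exp (-(2 * L * u)) ≤ (r / (1 + 2 * L)) ^ r := by
  have hs : 0 < 1 + 2 * L := by linarith
  rw [div_pow, le_div_iff₀ (by positivity)]
  calc u ^ r * exp (-(2 * L * u)) * (1 + 2 * L) ^ r
      = ((1 + 2 * L) * u) ^ r * exp (-(2 * L * u)) := by rw [mul_pow]; ring
    _ ≤ r ^ r * exp ((1 + 2 * L) * u - r) * exp (-(2 * L * u)) := by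
      gcongr; exact pow_le_pow_mul_exp_sub (by positivity) r
    _ = r ^ r * exp (u - r) := by rw [mul_assoc, ← exp_add]; ring_nf
    _ ≤ r ^ r := mul_le_of_le_one_right (by positivity) (exp_le_one_iff.mpr (by linarith))

lemma le_max_mul_exp_neg_max_log_div {γ ψ : ℝ} (hγ : 0 ≤ γ) (hψ : 0 ≤ ψ) :
    γ ≤ max γ ψ * exp (-max (log (ψ / γ)) 0) := by
  rcases le_total ψ γ with hψγ | hγψ
  · have : log (ψ / γ) ≤ 0 := log_nonpos (by positivity) (div_le_one_of_le₀ hψγ hγ)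
    simp [max_eq_left hψγ, max_eq_right this]
  rcases hγ.eq_or_lt with rfl | hγ
  · positivity
  have : 0 ≤ log (ψ / γ) := log_nonneg ((one_le_div hγ).mpr hγψ)
  have hψ : 0 < ψ := hγ.trans_le hγψ
  rw [max_eq_right hγψ, max_eq_left this, exp_neg, exp_log (by positivity), inv_div,
    mul_div_cancel₀ _ hψ.ne']

lemma pow_mul_pow_mul_pow_le {γ ψ : ℝ} (hγ : 0 ≤ γ) (hψ : 0 ≤ ψ) {u r : ℕ} (hur : 2 * u ≤ r) :
    (u : ℝ) ^ r * (γ ^ (2 * u) * ψ ^ (r - 2 * u))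
      ≤ (r * max γ ψ / (1 + 2 * max (log (ψ / γ)) 0)) ^ r := by
  set L := max (log (ψ / γ)) 0
  set T := max γ ψ
  have hL : 0 ≤ L := le_max_right _ _
  calc (u : ℝ) ^ r * (γ ^ (2 * u) * ψ ^ (r - 2 * u))
      ≤ u ^ r * ((T * exp (-L)) ^ (2 * u) * T ^ (r - 2 * u)) := by
        gcongr
        · exact le_max_mul_exp_neg_max_log_div hγ hψ
        · exact le_max_right γ ψ
    _ = u ^ r * exp (-(2 * L * u)) * T ^ r := by
        have hT : T ^ r = T ^ (2 * u) * T ^ (r - 2 * u) := by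
          rw [← pow_add, Nat.add_sub_cancel' hur]
        have hexp : ((2 * u : ℕ) : ℝ) * -L = -(2 * L * u) := by push_cast; ring
        rw [hT, mul_pow, ← exp_nat_mul, hexp]
        ring
    _ ≤ (r / (1 + 2 * L)) ^ r * T ^ r := by
        gcongr
        exact pow_mul_exp_neg_le (by positivity) hL (by exact_mod_cast (by omega : u ≤ r))
    _ = (r * T / (1 + 2 * L)) ^ r := by rw [← mul_pow]; ring

lemma sum_range_pow_mul_pow_mul_pow_le {γ ψ s : ℝ} (hγ : 0 ≤ γ) (hψ : 0 ≤ ψ) (hs : 0 ≤ s)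
    (hsγ : s ≤ γ ^ 2) (p : ℕ) :
    ∑ u ∈ range (p + 1), (u : ℝ) ^ (2 * p) * s ^ u * ψ ^ (2 * p - 2 * u)
      ≤ (2 * (2 * p : ℕ) * max γ ψ / (1 + 2 * max (log (ψ / γ)) 0)) ^ (2 * p) := by
  set B := ((2 * p : ℕ) * max γ ψ / (1 + 2 * max (log (ψ / γ)) 0)) ^ (2 * p)
  have hterm : ∀ u ∈ range (p + 1),
      (u : ℝ) ^ (2 * p) * s ^ u * ψ ^ (2 * p - 2 * u) ≤ B := fun u hu => by
    have hu : 2 * u ≤ 2 * p := by have := mem_range.mp hu; omega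
    calc (u : ℝ) ^ (2 * p) * s ^ u * ψ ^ (2 * p - 2 * u)
        ≤ (u : ℝ) ^ (2 * p) * (γ ^ (2 * u) * ψ ^ (2 * p - 2 * u)) := by
          rw [mul_assoc, pow_mul γ 2 u]; gcongr
      _ ≤ B := pow_mul_pow_mul_pow_le hγ hψ hu
  have hcount : ((p + 1 : ℕ) : ℝ) ≤ 2 ^ (2 * p) := by
    exact_mod_cast (Nat.lt_two_pow_self (n := p)).trans_le
      (Nat.pow_le_pow_right two_pos (by omega))
  calc ∑ u ∈ range (p + 1), (u : ℝ) ^ (2 * p) * s ^ u * ψ ^ (2 * p - 2 * u)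
      ≤ ((p + 1 : ℕ) : ℝ) * B := by
        simpa using sum_le_sum hterm
    _ ≤ 2 ^ (2 * p) * B := by gcongr
    _ = _ := by rw [← mul_pow]; ring

lemma pow_mul_one_div_le {x q ψ n : ℝ} (hq : 0 < q) (hx : 0 ≤ x) (hxq : x ≤ q * ψ) (hn : 0 ≤ n)
    {c : ℕ} (hc : 2 ≤ c) : x ^ c * (1 / (n * q ^ (c - 2))) ≤ ψ ^ (c - 2) * (x ^ 2 / n) := by
  have hxc : x ^ c = x ^ (c - 2) * x ^ 2 := by rw [← pow_add, Nat.sub_add_cancel hc]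
  calc x ^ c * (1 / (n * q ^ (c - 2))) = (x / q) ^ (c - 2) * (x ^ 2 / n) := by
        rw [hxc, div_pow]; ring
    _ ≤ ψ ^ (c - 2) * (x ^ 2 / n) := by
        gcongr
        exact (div_le_iff₀' hq).mpr hxq

lemma sum_powersetCard_prod_le_pow {ι : Type*} [DecidableEq ι] (s : Finset ι) {w : ι → ℝ}
    (hw : ∀ i ∈ s, 0 ≤ w i) (u : ℕ) :
    ∑ S ∈ powersetCard u s, ∏ i ∈ S, w i ≤ (∑ i ∈ s, w i) ^ u := by
  induction s using Finset.induction_on generalizing u with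
  | empty =>
    cases u with
    | zero => simp
    | succ u => simp [powersetCard_eq_empty.mpr (by simp : (∅ : Finset ι).card < u + 1)]
  | insert x s hx ih =>
    cases u with
    | zero => simp
    | succ u =>
    have hw' : ∀ i ∈ s, 0 ≤ w i := fun i hi => hw i (mem_insert_of_mem hi)
    have hwx : 0 ≤ w x := hw x (mem_insert_self x s)
    have hA : 0 ≤ ∑ i ∈ s, w i := sum_nonneg hw'
    have hdisj : Disjoint (powersetCard (u + 1) s) ((powersetCard u s).image (insert x)) := by
      refine disjoint_left.mpr fun S hS hS' => ?_
      obtain ⟨T, -, rfl⟩ := mem_image.mp hS'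
      exact hx ((mem_powersetCard.mp hS).1 (mem_insert_self x T))
    have himage : ∑ S ∈ (powersetCard u s).image (insert x), ∏ i ∈ S, w i
        ≤ w x * (∑ i ∈ s, w i) ^ u := by
      have hsub : ∀ S ∈ (powersetCard u s).image (insert x), S ⊆ insert x s := fun S hS => by
        obtain ⟨T, hT, rfl⟩ := mem_image.mp hS
        exact insert_subset_insert x (mem_powersetCard.mp hT).1
      calc ∑ S ∈ (powersetCard u s).image (insert x), ∏ i ∈ S, w i
          ≤ ∑ T ∈ powersetCard u s, ∏ i ∈ insert x T, w i :=
            sum_image_le_of_nonneg fun S hS => prod_nonneg fun i hi => hw i (hsub S hS hi)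
        _ = w x * ∑ T ∈ powersetCard u s, ∏ i ∈ T, w i := by
            rw [mul_sum]
            exact sum_congr rfl fun T hT =>
              prod_insert fun hxT => hx ((mem_powersetCard.mp hT).1 hxT)
        _ ≤ w x * (∑ i ∈ s, w i) ^ u := by gcongr; exact ih hw' u
    rw [powersetCard_succ_insert hx, sum_union hdisj, sum_insert hx]
    calc _ ≤ (∑ i ∈ s, w i) ^ (u + 1) + w x * (∑ i ∈ s, w i) ^ u := add_le_add (ih hw' _) himage
      _ = (w x + ∑ i ∈ s, w i) * (∑ i ∈ s, w i) ^ u := by ring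
      _ ≤ (w x + ∑ i ∈ s, w i) ^ (u + 1) := by
          rw [pow_succ' (w x + _)]
          gcongr
          exact le_add_of_nonneg_left hwx

-- Bound for the mean of a product of `c` factors built from one centered variable `Y` with
-- `E|Y|^c ≤ ψ^(c-2) w`: a single factor has mean zero.
def fiberWeight (ψ w : ℝ) : ℕ → ℝ
  | 0 => 1
  | 1 => 0
  | c + 2 => ψ ^ c * w

def imageWeight {ι : Type*} (r : ℕ) (ψ : ℝ) (w : ι → ℝ) (S : Finset ι) : ℝ :=
  if 2 * #S ≤ r then ψ ^ (r - 2 * #S) * ∏ i ∈ S, w i else 0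

lemma imageWeight_nonneg {ι : Type*} (r : ℕ) {ψ : ℝ} (hψ : 0 ≤ ψ) {w : ι → ℝ} (hw : ∀ i, 0 ≤ w i)
    (S : Finset ι) : 0 ≤ imageWeight r ψ w S := by
  unfold imageWeight
  split_ifs
  · exact mul_nonneg (pow_nonneg hψ _) (prod_nonneg fun i _ => hw i)
  · exact le_rfl

section Combinatorics

variable {ι κ : Type*} [Fintype ι] [Fintype κ] [DecidableEq ι]

lemma prod_fiberWeight_le {ψ : ℝ} (hψ : 0 ≤ ψ) {w : ι → ℝ} (hw : ∀ i, 0 ≤ w i) (d : κ → ι) :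
    ∏ i, fiberWeight ψ (w i) #{j | d j = i}
      ≤ imageWeight (Fintype.card κ) ψ w (univ.image d) := by
  by_cases hsingle : ∃ i, #{j | d j = i} = 1
  · obtain ⟨i, hi⟩ := hsingle
    rw [prod_eq_zero (mem_univ i) (by rw [hi]; rfl)]
    exact imageWeight_nonneg _ hψ hw _
  push Not at hsingle
  have hfiber : ∀ i ∈ univ.image d, 2 ≤ #{j | d j = i} := by
    intro i hi
    obtain ⟨j, -, rfl⟩ := mem_image.mp hi
    have : 0 < #{j' | d j' = d j} := card_pos.mpr ⟨j, by simp⟩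
    have := hsingle (d j)
    omega
  have hsum : ∑ i ∈ univ.image d, #{j | d j = i} = Fintype.card κ :=
    (card_eq_sum_card_fiberwise fun j _ => mem_image_of_mem d (mem_univ j)).symm
  have hexp : ∑ i ∈ univ.image d, (#{j | d j = i} - 2)
      = Fintype.card κ - 2 * #(univ.image d) := by
    rw [sum_tsub_distrib _ hfiber, hsum, sum_const, smul_eq_mul, mul_comm]
  have h2 : 2 * #(univ.image d) ≤ Fintype.card κ := by
    rw [← hsum, mul_comm, ← smul_eq_mul, ← sum_const]
    exact sum_le_sum hfiber
  rw [imageWeight, if_pos h2, ← hexp, ← prod_pow_eq_pow_sum, ← prod_mul_distrib]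
  refine le_of_eq ((prod_subset (subset_univ _) fun i _ hi => ?_).symm.trans
    (prod_congr rfl fun i hi => ?_))
  · have : #{j | d j = i} = 0 := card_eq_zero.mpr (filter_eq_empty_iff.mpr fun j _ hj =>
      hi (hj ▸ mem_image_of_mem d (mem_univ j)))
    rw [this]; rfl
  · obtain ⟨c, hc⟩ := Nat.exists_eq_add_of_le' (hfiber i hi)
    rw [hc, Nat.add_sub_cancel]; rfl

lemma card_filter_image_eq_le [DecidableEq κ] (S : Finset ι) :
    #{d : κ → ι | univ.image d = S} ≤ #S ^ Fintype.card κ := by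
  calc #{d : κ → ι | univ.image d = S} ≤ #(Fintype.piFinset fun _ : κ => S) := by
        refine card_le_card fun d hd => Fintype.mem_piFinset.mpr fun j => ?_
        rw [← (mem_filter.mp hd).2]
        exact mem_image_of_mem d (mem_univ j)
    _ = #S ^ Fintype.card κ := by simp

lemma sum_image_le_sum_pow_mul [DecidableEq κ] {f : Finset ι → ℝ} (hf : ∀ S, 0 ≤ f S) :
    ∑ d : κ → ι, f (univ.image d) ≤ ∑ S : Finset ι, (#S : ℝ) ^ Fintype.card κ * f S := by
  rw [sum_comp]
  calc ∑ S ∈ univ.image (fun d : κ → ι => univ.image d), #{d : κ → ι | univ.image d = S} • f S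
      ≤ ∑ S ∈ univ.image (fun d : κ → ι => univ.image d), (#S : ℝ) ^ Fintype.card κ * f S := by
        gcongr with S
        rw [nsmul_eq_mul]
        gcongr
        · exact hf S
        · exact_mod_cast card_filter_image_eq_le S
    _ ≤ _ := sum_le_sum_of_subset_of_nonneg (subset_univ _) fun S _ _ => by
        have := hf S; positivity

lemma sum_prod_fiberWeight_le [DecidableEq κ] {ψ : ℝ} (hψ : 0 ≤ ψ) {w : ι → ℝ}
    (hw : ∀ i, 0 ≤ w i) :
    ∑ d : κ → ι, ∏ i, fiberWeight ψ (w i) #{j | d j = i}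
      ≤ ∑ u ∈ range (Fintype.card κ / 2 + 1),
          (u : ℝ) ^ Fintype.card κ * (∑ i, w i) ^ u * ψ ^ (Fintype.card κ - 2 * u) := by
  set r := Fintype.card κ
  calc ∑ d : κ → ι, ∏ i, fiberWeight ψ (w i) #{j | d j = i}
      ≤ ∑ d : κ → ι, imageWeight r ψ w (univ.image d) :=
        sum_le_sum fun d _ => prod_fiberWeight_le hψ hw d
    _ ≤ ∑ S : Finset ι, (#S : ℝ) ^ r * imageWeight r ψ w S :=
        sum_image_le_sum_pow_mul (imageWeight_nonneg r hψ hw)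
    _ = ∑ u ∈ range (r / 2 + 1), ∑ S ∈ powersetCard u univ,
          (u : ℝ) ^ r * ψ ^ (r - 2 * u) * ∏ i ∈ S, w i := by
        simp only [imageWeight, mul_ite, mul_zero]
        rw [← sum_filter, ← sum_fiberwise_of_maps_to (g := card) (t := range (r / 2 + 1))
          fun S hS => by simp at hS ⊢; omega]
        refine sum_congr rfl fun u hu => ?_
        have : ({S ∈ univ | 2 * #S ≤ r} : Finset (Finset ι)).filter (#· = u)
            = powersetCard u univ := by
          ext S; simp [mem_powersetCard] at hu ⊢; omega
        rw [this]
        refine sum_congr rfl fun S hS => ?_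
        rw [(mem_powersetCard.mp hS).2]; ring
    _ ≤ ∑ u ∈ range (r / 2 + 1), (u : ℝ) ^ r * (∑ i, w i) ^ u * ψ ^ (r - 2 * u) := by
        gcongr with u
        rw [← mul_sum, mul_right_comm]
        gcongr
        exact sum_powersetCard_prod_le_pow univ (fun i _ => hw i) u

end Combinatorics

section Moments

variable {Ω ι κ : Type*} [MeasurableSpace Ω] {μ : Measure Ω} [IsProbabilityMeasure μ]
  [Fintype ι] [Fintype κ] [DecidableEq ι]

lemma norm_integral_prod_le_fiberWeight (φ : κ → ℂ →ₗᵢ[ℝ] ℂ) {Y : Ω → ℂ}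
    (hmean : ∫ ω, Y ω ∂μ = 0) {ψ w : ℝ}
    (hmom : ∀ c, 2 ≤ c → c ≤ Fintype.card κ → ∫ ω, ‖Y ω‖ ^ c ∂μ ≤ ψ ^ (c - 2) * w)
    (s : Finset κ) :
    ‖∫ ω, ∏ j ∈ s, φ j (Y ω) ∂μ‖ ≤ fiberWeight ψ w #s := by
  match hs : #s with
  | 0 => simp [card_eq_zero.mp hs, fiberWeight]
  | 1 =>
    obtain ⟨j, rfl⟩ := card_eq_one.mp hs
    simp [fiberWeight, LinearIsometry.integral_comp_comm, hmean]
  | c + 2 =>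
    calc ‖∫ ω, ∏ j ∈ s, φ j (Y ω) ∂μ‖ ≤ ∫ ω, ‖∏ j ∈ s, φ j (Y ω)‖ ∂μ :=
          norm_integral_le_integral_norm _
      _ = ∫ ω, ‖Y ω‖ ^ (c + 2) ∂μ := by simp [norm_prod, hs]
      _ ≤ ψ ^ c * w := hmom (c + 2) le_add_self (hs.symm.trans_le (card_le_univ s))

lemma norm_integral_prod_le_prod_fiberWeight (φ : κ → ℂ →ₗᵢ[ℝ] ℂ) {Y : ι → Ω → ℂ}
    (hindep : iIndepFun Y μ) (hmeas : ∀ i, AEMeasurable (Y i) μ)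
    (hmean : ∀ i, ∫ ω, Y i ω ∂μ = 0) {ψ : ℝ} {w : ι → ℝ}
    (hmom : ∀ i c, 2 ≤ c → c ≤ Fintype.card κ → ∫ ω, ‖Y i ω‖ ^ c ∂μ ≤ ψ ^ (c - 2) * w i)
    (d : κ → ι) :
    ‖∫ ω, ∏ j, φ j (Y (d j) ω) ∂μ‖ ≤ ∏ i, fiberWeight ψ (w i) #{j | d j = i} := by
  have hfactor : ∀ ω, ∏ j, φ j (Y (d j) ω) = ∏ i, ∏ j with d j = i, φ j (Y i ω) := fun ω => by
    rw [← prod_fiberwise univ d]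
    exact prod_congr rfl fun i _ => prod_congr rfl fun j hj => by rw [(mem_filter.mp hj).2]
  simp_rw [hfactor]
  rw [hindep.integral_fun_prod_comp hmeas fun i => (by fun_prop : Continuous
    fun z => ∏ j with d j = i, φ j z).aestronglyMeasurable, norm_prod]
  exact prod_le_prod (fun i _ => norm_nonneg _) fun i _ =>
    norm_integral_prod_le_fiberWeight φ (hmean i) (hmom i) _

lemma norm_integral_prod_sum_le [DecidableEq κ] (φ : κ → ℂ →ₗᵢ[ℝ] ℂ) {Y : ι → Ω → ℂ}
    (hindep : iIndepFun Y μ) (hLp : ∀ i, MemLp (Y i) (Fintype.card κ) μ)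
    (hmean : ∀ i, ∫ ω, Y i ω ∂μ = 0) {ψ : ℝ} {w : ι → ℝ}
    (hmom : ∀ i c, 2 ≤ c → c ≤ Fintype.card κ → ∫ ω, ‖Y i ω‖ ^ c ∂μ ≤ ψ ^ (c - 2) * w i) :
    ‖∫ ω, ∏ j, φ j (∑ i, Y i ω) ∂μ‖ ≤ ∑ d : κ → ι, ∏ i, fiberWeight ψ (w i) #{j | d j = i} := by
  have hexpand : ∀ ω, ∏ j, φ j (∑ i, Y i ω) = ∑ d : κ → ι, ∏ j, φ j (Y (d j) ω) := fun ω => by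
    simp_rw [map_sum]
    exact Fintype.prod_sum _
  -- Hölder: a product of `card κ` functions in `L^(card κ)` is integrable.
  have hint : ∀ d : κ → ι, Integrable (fun ω => ∏ j, φ j (Y (d j) ω)) μ := fun d => by
    have := MemLp.prod' (s := univ) fun j _ =>
      (φ j).toContinuousLinearMap.comp_memLp' (hLp (d j))
    refine this.integrable ?_
    simp
  simp_rw [hexpand]
  rw [integral_finsetSum _ fun d _ => hint d]
  exact (norm_sum_le _ _).trans (sum_le_sum fun d _ => norm_integral_prod_le_prod_fiberWeight φ
    hindep (fun i => (hLp i).aestronglyMeasurable.aemeasurable) hmean hmom d)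

noncomputable def idOrConj (p : ℕ) : Fin p ⊕ Fin p → ℂ →ₗᵢ[ℝ] ℂ :=
  Sum.elim (fun _ => LinearIsometry.id) fun _ => Complex.conjLIE.toLinearIsometry

lemma prod_idOrConj (p : ℕ) (z : ℂ) : ∏ j, idOrConj p j z = ((‖z‖ ^ (2 * p) : ℝ) : ℂ) := by
  simp [idOrConj, Fintype.prod_sum_type, ← mul_pow, Complex.mul_conj, Complex.normSq_eq_norm_sq,
    pow_mul]

theorem integral_norm_sum_pow_le {Y : ι → Ω → ℂ} (p : ℕ) (hindep : iIndepFun Y μ)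
    (hLp : ∀ i, MemLp (Y i) (2 * p : ℕ) μ) (hmean : ∀ i, ∫ ω, Y i ω ∂μ = 0)
    {ψ : ℝ} (hψ : 0 ≤ ψ) {w : ι → ℝ} (hw : ∀ i, 0 ≤ w i)
    (hmom : ∀ i c, 2 ≤ c → c ≤ 2 * p → ∫ ω, ‖Y i ω‖ ^ c ∂μ ≤ ψ ^ (c - 2) * w i) :
    ∫ ω, ‖∑ i, Y i ω‖ ^ (2 * p) ∂μ
      ≤ ∑ u ∈ range (p + 1), (u : ℝ) ^ (2 * p) * (∑ i, w i) ^ u * ψ ^ (2 * p - 2 * u) := by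
  have hcard : Fintype.card (Fin p ⊕ Fin p) = 2 * p := by simp [two_mul]
  have hnorm : ∫ ω, ‖∑ i, Y i ω‖ ^ (2 * p) ∂μ
      = ‖∫ ω, ∏ j, idOrConj p j (∑ i, Y i ω) ∂μ‖ := by
    simp_rw [prod_idOrConj, integral_complex_ofReal, Complex.norm_real, Real.norm_eq_abs]
    exact (abs_of_nonneg (integral_nonneg fun ω => by positivity)).symm
  refine (hnorm.trans_le (norm_integral_prod_sum_le (idOrConj p) hindep (hcard ▸ hLp) hmean
    (hcard ▸ hmom))).trans ?_
  have := sum_prod_fiberWeight_le (κ := Fin p ⊕ Fin p) hψ hw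
  rwa [hcard, Nat.mul_div_cancel_left p two_pos] at this

end Moments

theorem integral_norm_sum_mul_pow_le {Ω : Type*} [MeasurableSpace Ω] {μ : Measure Ω}
    [IsProbabilityMeasure μ] {N : ℕ} {p : ℕ} (hp : p ≠ 0) {q : ℝ} (hq : 0 < q)
    {X : Fin N → Ω → ℂ} (hindep : iIndepFun X μ) (hint : ∀ i, Integrable (X i) μ)
    (hmean : ∀ i, ∫ ω, X i ω ∂μ = 0)
    (hintr : ∀ i, Integrable (fun ω => ‖X i ω‖ ^ (2 * p)) μ)
    (hmom : ∀ i k, 2 ≤ k → k ≤ 2 * p → ∫ ω, ‖X i ω‖ ^ k ∂μ ≤ 1 / (N * q ^ (k - 2)))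
    {a : Fin N → ℂ} {ψ : ℝ} (hψ : 0 ≤ ψ) (ha : ∀ i, ‖a i‖ ≤ q * ψ) :
    ∫ ω, ‖∑ i, a i * X i ω‖ ^ (2 * p) ∂μ
      ≤ ∑ u ∈ range (p + 1),
          (u : ℝ) ^ (2 * p) * (∑ i, ‖a i‖ ^ 2 / N) ^ u * ψ ^ (2 * p - 2 * u) := by
  have hXLp : ∀ i, MemLp (X i) (2 * p : ℕ) μ := fun i =>
    (integrable_norm_rpow_iff (hint i).aestronglyMeasurable
      (by exact_mod_cast (by omega : 2 * p ≠ 0)) (ENNReal.natCast_ne_top _)).mp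
      (by simpa only [ENNReal.toReal_natCast, Real.rpow_natCast] using hintr i)
  refine integral_norm_sum_pow_le (Y := fun i ω => a i * X i ω) p
    (hindep.comp (fun i z => a i * z) fun i => measurable_const_mul (a i))
    (fun i => (hXLp i).const_mul (a i)) (fun i => by simp [integral_const_mul, hmean i]) hψ
    (fun i => by positivity) fun i c hc hcr => ?_
  simp only [norm_mul, mul_pow, integral_const_mul]
  exact (mul_le_mul_of_nonneg_left (hmom i c hc hcr) (by positivity)).trans
    (pow_mul_one_div_le hq (norm_nonneg _) (ha i) N.cast_nonneg hc)

theorem stmt_10_general {Ω : Type*} [MeasurableSpace Ω] (μ : Measure Ω) [IsProbabilityMeasure μ]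
    {N : ℕ} (r : ℕ) (hr : Even r) (hr2 : 2 ≤ r)
    (q : ℝ) (hq1 : 1 ≤ q)
    (X : Fin N → Ω → ℂ)
    (hindep : iIndepFun X μ)
    (hint : ∀ i, Integrable (X i) μ)
    (hmean : ∀ i, ∫ ω, X i ω ∂μ = 0)
    (hintk : ∀ i, ∀ k, 2 ≤ k → k ≤ r → Integrable (fun ω => ‖X i ω‖ ^ k) μ)
    (hmom : ∀ i, ∀ k, 2 ≤ k → k ≤ r →
      ∫ ω, ‖X i ω‖ ^ k ∂μ ≤ 1 / (N * q ^ (k - 2)))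
    (a : Fin N → ℂ) (γ ψ : ℝ)
    (hγ : Real.sqrt ((1 / N) * ∑ i, ‖a i‖ ^ 2) ≤ γ)
    (hψ : (⨆ i, ‖a i‖) / q ≤ ψ) :
    (∫ ω, ‖∑ i, a i * X i ω‖ ^ r ∂μ) ^ ((1 : ℝ) / r)
      ≤ max ((2 * r : ℝ) / (1 + 2 * max (Real.log (ψ / γ)) 0)) 2 * max γ ψ := by
  obtain ⟨p, hp⟩ := hr
  rw [← two_mul] at hp
  subst hp
  have hq : 0 < q := one_pos.trans_le hq1
  have hγ0 : 0 ≤ γ := (Real.sqrt_nonneg _).trans hγ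
  have hψ0 : 0 ≤ ψ := (div_nonneg (Real.iSup_nonneg fun i => norm_nonneg (a i)) hq.le).trans hψ
  have ha : ∀ i, ‖a i‖ ≤ q * ψ := fun i =>
    (le_ciSup (Set.finite_range _).bddAbove i).trans ((div_le_iff₀' hq).mp hψ)
  have hw : ∑ i, ‖a i‖ ^ 2 / N ≤ γ ^ 2 := by
    rw [← sum_div, div_eq_inv_mul, ← one_div]
    exact (Real.sqrt_le_left hγ0).mp hγ
  have hT : 0 ≤ max γ ψ := le_max_of_le_left hγ0
  rw [one_div, Real.rpow_inv_le_iff_of_pos (integral_nonneg fun ω => by positivity)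
    (by positivity) (by positivity), Real.rpow_natCast]
  calc ∫ ω, ‖∑ i, a i * X i ω‖ ^ (2 * p) ∂μ
      ≤ ∑ u ∈ range (p + 1), (u : ℝ) ^ (2 * p) * (∑ i, ‖a i‖ ^ 2 / N) ^ u * ψ ^ (2 * p - 2 * u) :=
        integral_norm_sum_mul_pow_le (by omega) hq hindep hint hmean
          (fun i => hintk i _ hr2 le_rfl) hmom hψ0 ha
    _ ≤ (2 * (2 * p : ℕ) * max γ ψ / (1 + 2 * max (log (ψ / γ)) 0)) ^ (2 * p) :=
        sum_range_pow_mul_pow_mul_pow_le hγ0 hψ0 (sum_nonneg fun i _ => by positivity) hw p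
    _ ≤ _ := by
        rw [mul_div_right_comm]
        gcongr
        exact le_max_left _ _

/-- Linear large deviation bound for sparse vectors: if `X₁,…,X_N` are independent, centered,
with `E|X_i|^k ≤ 1/(N q^{k−2})` for `2 ≤ k ≤ r` (`r ≥ 2` even, `1 ≤ q ≤ √N`), and the
deterministic coefficients satisfy `((1/N)∑|a_i|²)^{1/2} ≤ γ` and `(max_i |a_i|)/q ≤ ψ`, then
`‖∑ a_i X_i‖_r ≤ max (2r/(1 + 2(log(ψ/γ))₊)) 2 * max γ ψ`. -/
theorem stmt_10 {Ω : Type*} [MeasurableSpace Ω] (μ : Measure Ω) [IsProbabilityMeasure μ]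
    {N : ℕ} (r : ℕ) (hr : Even r) (hr2 : 2 ≤ r)
    (q : ℝ) (hq1 : 1 ≤ q) (hqN : q ≤ Real.sqrt N)
    (X : Fin N → Ω → ℂ) (hmeas : ∀ i, Measurable (X i))
    (hindep : iIndepFun X μ)
    (hint : ∀ i, Integrable (X i) μ)
    (hmean : ∀ i, ∫ ω, X i ω ∂μ = 0)
    (hintk : ∀ i, ∀ k, 2 ≤ k → k ≤ r → Integrable (fun ω => ‖X i ω‖ ^ k) μ)
    (hmom : ∀ i, ∀ k, 2 ≤ k → k ≤ r →
      ∫ ω, ‖X i ω‖ ^ k ∂μ ≤ 1 / (N * q ^ (k - 2)))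
    (a : Fin N → ℂ) (γ ψ : ℝ)
    (hγ : Real.sqrt ((1 / N) * ∑ i, ‖a i‖ ^ 2) ≤ γ)
    (hψ : (⨆ i, ‖a i‖) / q ≤ ψ) :
    (∫ ω, ‖∑ i, a i * X i ω‖ ^ r ∂μ) ^ ((1 : ℝ) / r)
      ≤ max ((2 * r : ℝ) / (1 + 2 * max (Real.log (ψ / γ)) 0)) 2 * max γ ψ :=
  stmt_10_general μ r hr hr2 q hq1 X hindep hint hmean hintk hmom a γ ψ hγ hψ
end

section
/- Under the assumptions of the linear large deviation bound, the r-th moment satisfies E|∑_i a_i X_i|^r ≤ ∑_{k=1}^{r/2} S(r,k) γ^{2k} ψ^{r−2k}, where S(r,k) is the Stirling number of the second kind, γ = ((1/N)∑_i |a_i|²)^{1/2}, and ψ = (max_i |a_i|)/q. -/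
/-!
Write `|S|^(2m) = S^m · conj(S)^m` with `S = ∑ i, a i X i` and expand: the moment becomes a sum,
over all maps `G : Fin (2m) → Fin N`, of expectations of products of the `a i X i` and their
conjugates. By independence each expectation factors over the fibres of `G`. A singleton fibre
kills the term (centering); otherwise every fibre has size `≥ 2`, so `k = #(image G) ≤ m`, and the
moment bounds give `ψ^(2m - 2k) ∏_{i ∈ image G} |a i|² / N`. Summed over the maps with image of
size `k`, these weights are at most `S(2m, k) (∑ i, |a i|² / N)^k`, by the recursion defining the
Stirling numbers.
-/

open MeasureTheory ProbabilityTheory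

open Finset

section CardWeight

variable {ι : Type*} {w : ι → ℝ}

def cardWeight (w : ι → ℝ) (k : ℕ) (t : Finset ι) : ℝ :=
  if #t = k then ∏ i ∈ t, w i else 0

lemma cardWeight_nonneg (hw : ∀ i, 0 ≤ w i) (k : ℕ) (t : Finset ι) : 0 ≤ cardWeight w k t := by
  unfold cardWeight
  split_ifs
  · exact prod_nonneg fun i _ ↦ hw i
  · exact le_rfl

lemma cardWeight_zero_insert [DecidableEq ι] (w : ι → ℝ) (x : ι) (t : Finset ι) :
    cardWeight w 0 (insert x t) = 0 := by
  simp [cardWeight]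

lemma cardWeight_succ_insert_of_notMem [DecidableEq ι] (k : ℕ) {x : ι} {t : Finset ι}
    (hx : x ∉ t) :
    cardWeight w (k + 1) (insert x t) = w x * cardWeight w k t := by
  simp [cardWeight, card_insert_of_notMem hx, prod_insert hx, mul_ite]

lemma card_mul_cardWeight (w : ι → ℝ) (k : ℕ) (t : Finset ι) :
    (#t : ℝ) * cardWeight w k t = k * cardWeight w k t := by
  unfold cardWeight
  split_ifs with h <;> simp [h]

variable [Fintype ι] [DecidableEq ι]

lemma sum_cardWeight_succ_insert_le (hw : ∀ i, 0 ≤ w i) (k : ℕ) (t : Finset ι) :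
    ∑ x, cardWeight w (k + 1) (insert x t)
      ≤ (k + 1) * cardWeight w (k + 1) t + (∑ x, w x) * cardWeight w k t := by
  rw [← sum_filter_add_sum_filter_not univ (· ∈ t)]
  gcongr ?_ + ?_
  · rw [sum_congr rfl fun x hx ↦ by rw [insert_eq_of_mem (mem_filter.1 hx).2], sum_const,
      filter_mem_eq_inter, univ_inter, nsmul_eq_mul, card_mul_cardWeight]
    push_cast
    rfl
  · rw [sum_congr rfl fun x hx ↦ cardWeight_succ_insert_of_notMem k (mem_filter.1 hx).2,
      ← sum_mul]
    gcongr ?_ * _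
    · exact cardWeight_nonneg hw k t
    · exact sum_le_sum_of_subset_of_nonneg (subset_univ _) fun i _ _ ↦ hw i

lemma sum_image_fin_succ {M : Type*} [AddCommMonoid M] (n : ℕ) (f : Finset ι → M) :
    ∑ G : Fin (n + 1) → ι, f (univ.image G)
      = ∑ g : Fin n → ι, ∑ x, f (insert x (univ.image g)) := by
  rw [← (Fin.consEquiv fun _ ↦ ι).sum_comp, Fintype.sum_prod_type, sum_comm]
  refine sum_congr rfl fun g _ ↦ sum_congr rfl fun x _ ↦ congrArg f ?_
  ext y
  simp [Fin.exists_fin_succ, eq_comm]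

theorem sum_cardWeight_image_le (hw : ∀ i, 0 ≤ w i) :
    ∀ n k, ∑ G : Fin n → ι, cardWeight w k (univ.image G) ≤ stirling n k * (∑ i, w i) ^ k
  | 0, 0 => by simp [cardWeight, stirling]
  | 0, k + 1 => by simp [cardWeight, stirling]
  | n + 1, 0 => by simp [sum_image_fin_succ, cardWeight_zero_insert, stirling]
  | n + 1, k + 1 => by
    have hW : 0 ≤ ∑ i, w i := sum_nonneg fun i _ ↦ hw i
    calc ∑ G : Fin (n + 1) → ι, cardWeight w (k + 1) (univ.image G)
        ≤ ∑ g : Fin n → ι, ((k + 1) * cardWeight w (k + 1) (univ.image g)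
            + (∑ i, w i) * cardWeight w k (univ.image g)) := by
          rw [sum_image_fin_succ]
          exact sum_le_sum fun g _ ↦ sum_cardWeight_succ_insert_le hw k _
      _ ≤ (k + 1) * (stirling n (k + 1) * (∑ i, w i) ^ (k + 1))
            + (∑ i, w i) * (stirling n k * (∑ i, w i) ^ k) := by
          rw [sum_add_distrib, ← mul_sum, ← mul_sum]
          gcongr
          · exact sum_cardWeight_image_le hw n (k + 1)
          · exact sum_cardWeight_image_le hw n k
      _ = stirling (n + 1) (k + 1) * (∑ i, w i) ^ (k + 1) := by
          simp only [stirling]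
          push_cast
          ring

end CardWeight

section Fibers

variable {ι : Type*} [DecidableEq ι] {n : ℕ} {G : Fin n → ι}

lemma mem_image_iff_card_fiber_ne_zero {i : ι} : i ∈ univ.image G ↔ #{j | G j = i} ≠ 0 := by
  simp only [mem_image, mem_univ, true_and, ← Nat.pos_iff_ne_zero, card_pos, filter_nonempty_iff]

lemma sum_card_fiber_image (G : Fin n → ι) : ∑ i ∈ univ.image G, #{j | G j = i} = n := by
  simpa using (card_eq_sum_card_image G univ).symm

lemma two_mul_card_image_le (h : ∀ i ∈ univ.image G, 2 ≤ #{j | G j = i}) :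
    2 * #(univ.image G) ≤ n := by
  calc 2 * #(univ.image G) = ∑ _i ∈ univ.image G, 2 := by rw [sum_const, smul_eq_mul, mul_comm]
    _ ≤ ∑ i ∈ univ.image G, #{j | G j = i} := sum_le_sum h
    _ = n := sum_card_fiber_image G

lemma sum_card_fiber_sub_two (h : ∀ i ∈ univ.image G, 2 ≤ #{j | G j = i}) :
    ∑ i ∈ univ.image G, (#{j | G j = i} - 2) = n - 2 * #(univ.image G) := by
  rw [sum_tsub_distrib _ h, sum_card_fiber_image, sum_const, smul_eq_mul, mul_comm]

end Fibers

section ConjIf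

def conjIf (b : Bool) : ℂ →+* ℂ := bif b then starRingEnd ℂ else RingHom.id ℂ

@[simp] lemma norm_conjIf (b : Bool) (z : ℂ) : ‖conjIf b z‖ = ‖z‖ := by
  cases b <;> simp [conjIf]

lemma continuous_conjIf (b : Bool) : Continuous (conjIf b) := by
  cases b
  · exact continuous_id
  · exact Complex.continuous_conj

lemma integral_conjIf {Ω : Type*} [MeasurableSpace Ω] (μ : Measure Ω) (b : Bool) (f : Ω → ℂ) :
    ∫ ω, conjIf b (f ω) ∂μ = conjIf b (∫ ω, f ω ∂μ) := by
  cases b <;> simp [conjIf, integral_conj]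

lemma prod_conjIf_append_eq_norm_pow (m : ℕ) (z : ℂ) :
    ∏ j, conjIf (Fin.append (fun _ : Fin m ↦ false) (fun _ : Fin m ↦ true) j) z
      = ((‖z‖ ^ (m + m) : ℝ) : ℂ) := by
  rw [Fin.prod_univ_add]
  simp only [Fin.append_left, Fin.append_right, prod_const, card_univ, Fintype.card_fin,
    ← mul_pow]
  simp [conjIf, Complex.mul_conj', ← pow_mul, two_mul]

end ConjIf

section Moments

variable {Ω : Type*} [MeasurableSpace Ω] {μ : Measure Ω}
  {ι : Type*} {Y : ι → Ω → ℂ} {n : ℕ} {v : ι → ℝ} {ψ : ℝ}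

lemma integral_prod_comp_eq_prod_fiber [Fintype ι] [DecidableEq ι] (hindep : iIndepFun Y μ)
    (hY : ∀ i, AEStronglyMeasurable (Y i) μ) {φ : Fin n → ℂ → ℂ} (hφ : ∀ j, Continuous (φ j))
    (G : Fin n → ι) :
    ∫ ω, ∏ j, φ j (Y (G j) ω) ∂μ = ∏ i, ∫ ω, ∏ j with G j = i, φ j (Y i ω) ∂μ := by
  have hfiber : ∀ ω, ∏ j, φ j (Y (G j) ω) = ∏ i, ∏ j with G j = i, φ j (Y i ω) := fun ω ↦ by
    rw [← prod_fiberwise univ G]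
    exact prod_congr rfl fun i _ ↦ prod_congr rfl fun j hj ↦ by rw [(mem_filter.1 hj).2]
  simp_rw [hfiber]
  have hcont : ∀ i, Continuous fun z ↦ ∏ j with G j = i, φ j z :=
    fun i ↦ continuous_finsetProd _ fun j _ ↦ hφ j
  exact (hindep.comp _ fun i ↦ (hcont i).measurable).integral_fun_prod_eq_prod_integral
    fun i ↦ (hcont i).comp_aestronglyMeasurable (hY i)

lemma norm_integral_prod_conjIf_le (b : Fin n → Bool) (s : Finset (Fin n)) (Z : Ω → ℂ) :
    ‖∫ ω, ∏ j ∈ s, conjIf (b j) (Z ω) ∂μ‖ ≤ ∫ ω, ‖Z ω‖ ^ #s ∂μ := by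
  refine (norm_integral_le_integral_norm _).trans_eq (integral_congr_ae ?_)
  filter_upwards with ω
  simp [norm_prod]

lemma integral_prod_conjIf_of_card_eq_one (b : Fin n → Bool) {s : Finset (Fin n)} (hs : #s = 1)
    {Z : Ω → ℂ} (hZ : ∫ ω, Z ω ∂μ = 0) :
    ∫ ω, ∏ j ∈ s, conjIf (b j) (Z ω) ∂μ = 0 := by
  obtain ⟨j, rfl⟩ := card_eq_one.1 hs
  simp [integral_conjIf, hZ]

lemma integrable_prod_conjIf_comp (hY : ∀ i, AEStronglyMeasurable (Y i) μ) (hn : n ≠ 0)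
    (hint : ∀ i, Integrable (fun ω ↦ ‖Y i ω‖ ^ n) μ) (b : Fin n → Bool) (G : Fin n → ι) :
    Integrable (fun ω ↦ ∏ j, conjIf (b j) (Y (G j) ω)) μ := by
  have hLp : ∀ i, MemLp (Y i) n μ := fun i ↦ by
    rw [← integrable_norm_rpow_iff (hY i) (by simpa using hn) (by simp)]
    simpa using hint i
  have hprod := MemLp.prod' (s := univ) (p := fun _ ↦ (n : ENNReal))
    fun j _ ↦ (hLp (G j)).congr_norm
      ((continuous_conjIf (b j)).comp_aestronglyMeasurable (hY (G j))) (by simp)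
  rw [← memLp_one_iff_integrable]
  convert hprod
  simp [ENNReal.mul_inv_cancel (Nat.cast_ne_zero.2 hn) (ENNReal.natCast_ne_top n)]

variable [IsProbabilityMeasure μ] [Fintype ι] [DecidableEq ι]

lemma norm_integral_prod_conjIf_comp_le (hindep : iIndepFun Y μ)
    (hY : ∀ i, AEStronglyMeasurable (Y i) μ) (hmean : ∀ i, ∫ ω, Y i ω ∂μ = 0)
    (hv : ∀ i, 0 ≤ v i) (hψ : 0 ≤ ψ)
    (hmom : ∀ i k, 2 ≤ k → k ≤ n → ∫ ω, ‖Y i ω‖ ^ k ∂μ ≤ v i * ψ ^ (k - 2))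
    (hn : n ≠ 0) (b : Fin n → Bool) (G : Fin n → ι) :
    ‖∫ ω, ∏ j, conjIf (b j) (Y (G j) ω) ∂μ‖
      ≤ ∑ k ∈ Icc 1 (n / 2), ψ ^ (n - 2 * k) * cardWeight v k (univ.image G) := by
  have hterm_nonneg : ∀ k, 0 ≤ ψ ^ (n - 2 * k) * cardWeight v k (univ.image G) :=
    fun k ↦ mul_nonneg (pow_nonneg hψ _) (cardWeight_nonneg hv k _)
  rw [integral_prod_comp_eq_prod_fiber hindep hY (fun j ↦ continuous_conjIf (b j)), norm_prod]
  by_cases hsingle : ∃ i, #{j | G j = i} = 1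
  · obtain ⟨i, hi⟩ := hsingle
    rw [prod_eq_zero (mem_univ i) (by rw [integral_prod_conjIf_of_card_eq_one b hi (hmean i),
      norm_zero])]
    exact sum_nonneg fun k _ ↦ hterm_nonneg k
  have hc2 : ∀ i ∈ univ.image G, 2 ≤ #{j | G j = i} := fun i hi ↦ by
    have := mem_image_iff_card_fiber_ne_zero.1 hi
    have := not_exists.1 hsingle i
    omega
  have hk : #(univ.image G) ∈ Icc 1 (n / 2) :=
    mem_Icc.2 ⟨((univ_nonempty_iff.2 ⟨⟨0, Nat.pos_of_ne_zero hn⟩⟩).image G).card_pos,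
      by have := two_mul_card_image_le hc2; omega⟩
  calc ∏ i, ‖∫ ω, ∏ j with G j = i, conjIf (b j) (Y i ω) ∂μ‖
      = ∏ i ∈ univ.image G, ‖∫ ω, ∏ j with G j = i, conjIf (b j) (Y i ω) ∂μ‖ := by
        refine (prod_subset (subset_univ _) fun i _ hi ↦ ?_).symm
        rw [card_eq_zero.1 (not_not.1 (mt mem_image_iff_card_fiber_ne_zero.2 hi))]
        simp
    _ ≤ ∏ i ∈ univ.image G, (v i * ψ ^ (#{j | G j = i} - 2)) :=
        prod_le_prod (fun i _ ↦ norm_nonneg _) fun i hi ↦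
          (norm_integral_prod_conjIf_le b _ (Y i)).trans
            (hmom i _ (hc2 i hi) ((card_filter_le _ _).trans_eq (card_fin n)))
    _ = ψ ^ (n - 2 * #(univ.image G)) * cardWeight v #(univ.image G) (univ.image G) := by
        rw [prod_mul_distrib, prod_pow_eq_pow_sum, sum_card_fiber_sub_two hc2, cardWeight,
          if_pos rfl, mul_comm]
    _ ≤ ∑ k ∈ Icc 1 (n / 2), ψ ^ (n - 2 * k) * cardWeight v k (univ.image G) :=
        single_le_sum (fun k _ ↦ hterm_nonneg k) hk

theorem norm_integral_prod_conjIf_sum_le (hindep : iIndepFun Y μ)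
    (hY : ∀ i, AEStronglyMeasurable (Y i) μ) (hmean : ∀ i, ∫ ω, Y i ω ∂μ = 0)
    (hint : ∀ i, Integrable (fun ω ↦ ‖Y i ω‖ ^ n) μ)
    (hv : ∀ i, 0 ≤ v i) (hψ : 0 ≤ ψ)
    (hmom : ∀ i k, 2 ≤ k → k ≤ n → ∫ ω, ‖Y i ω‖ ^ k ∂μ ≤ v i * ψ ^ (k - 2))
    (hn : n ≠ 0) (b : Fin n → Bool) :
    ‖∫ ω, ∏ j, conjIf (b j) (∑ i, Y i ω) ∂μ‖
      ≤ ∑ k ∈ Icc 1 (n / 2), (stirling n k : ℝ) * (∑ i, v i) ^ k * ψ ^ (n - 2 * k) := by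
  have hexpand : ∀ ω, ∏ j, conjIf (b j) (∑ i, Y i ω)
      = ∑ G : Fin n → ι, ∏ j, conjIf (b j) (Y (G j) ω) := fun ω ↦ by
    simp only [map_sum]
    exact Fintype.prod_sum _
  simp_rw [hexpand]
  rw [integral_finsetSum _ fun G _ ↦ integrable_prod_conjIf_comp hY hn hint b G]
  calc ‖∑ G : Fin n → ι, ∫ ω, ∏ j, conjIf (b j) (Y (G j) ω) ∂μ‖
      ≤ ∑ G : Fin n → ι, ∑ k ∈ Icc 1 (n / 2), ψ ^ (n - 2 * k) * cardWeight v k (univ.image G) :=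
        (norm_sum_le _ _).trans <| sum_le_sum fun G _ ↦
          norm_integral_prod_conjIf_comp_le hindep hY hmean hv hψ hmom hn b G
    _ = ∑ k ∈ Icc 1 (n / 2),
          ψ ^ (n - 2 * k) * ∑ G : Fin n → ι, cardWeight v k (univ.image G) := by
        rw [sum_comm]
        simp_rw [mul_sum]
    _ ≤ ∑ k ∈ Icc 1 (n / 2), ψ ^ (n - 2 * k) * ((stirling n k : ℝ) * (∑ i, v i) ^ k) := by
        gcongr with k
        exact sum_cardWeight_image_le hv n k
    _ = ∑ k ∈ Icc 1 (n / 2), (stirling n k : ℝ) * (∑ i, v i) ^ k * ψ ^ (n - 2 * k) :=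
        sum_congr rfl fun k _ ↦ mul_comm _ _

end Moments

lemma pow_mul_one_div_le_s11 {x M q N : ℝ} {k : ℕ} (hk : 2 ≤ k) (hx : 0 ≤ x) (hxM : x ≤ M)
    (hq : 0 < q) (hN : 0 ≤ N) :
    x ^ k * (1 / (N * q ^ (k - 2))) ≤ x ^ 2 / N * (M / q) ^ (k - 2) := by
  obtain ⟨l, rfl⟩ := Nat.exists_eq_add_of_le' hk
  calc x ^ (l + 2) * (1 / (N * q ^ (l + 2 - 2))) = x ^ 2 / N * (x / q) ^ l := by
        rw [Nat.add_sub_cancel, div_pow]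
        ring
    _ ≤ x ^ 2 / N * (M / q) ^ l := by gcongr

theorem stmt_11_general {Ω : Type*} [MeasurableSpace Ω] (μ : Measure Ω) [IsProbabilityMeasure μ]
    {N : ℕ} (r : ℕ) (hr : Even r) (hr2 : 2 ≤ r)
    (q : ℝ) (hq1 : 1 ≤ q)
    (X : Fin N → Ω → ℂ) (hmeas : ∀ i, Measurable (X i))
    (hindep : iIndepFun X μ)
    (hmean : ∀ i, ∫ ω, X i ω ∂μ = 0)
    (hintk : ∀ i, ∀ k, 2 ≤ k → k ≤ r → Integrable (fun ω => ‖X i ω‖ ^ k) μ)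
    (hmom : ∀ i, ∀ k, 2 ≤ k → k ≤ r →
      ∫ ω, ‖X i ω‖ ^ k ∂μ ≤ 1 / (N * q ^ (k - 2)))
    (a : Fin N → ℂ) :
    ∫ ω, ‖∑ i, a i * X i ω‖ ^ r ∂μ
      ≤ ∑ k ∈ Finset.Icc 1 (r / 2), (stirling r k : ℝ) *
          Real.sqrt ((1 / N) * ∑ i, ‖a i‖ ^ 2) ^ (2 * k) *
          ((⨆ i, ‖a i‖) / q) ^ (r - 2 * k) := by
  obtain ⟨m, rfl⟩ := hr
  have hq : 0 < q := by linarith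
  set M := ⨆ i, ‖a i‖
  have haM : ∀ i, ‖a i‖ ≤ M := le_ciSup (Set.finite_range _).bddAbove
  have hbound := norm_integral_prod_conjIf_sum_le (μ := μ) (Y := fun i ω ↦ a i * X i ω)
    (v := fun i ↦ ‖a i‖ ^ 2 / N) (ψ := M / q)
    (hindep.comp _ fun i ↦ measurable_const_mul (a i))
    (fun i ↦ ((hmeas i).const_mul (a i)).aestronglyMeasurable)
    (fun i ↦ by rw [integral_const_mul, hmean i, mul_zero])
    (fun i ↦ by simpa [mul_pow] using (hintk i _ hr2 le_rfl).const_mul (‖a i‖ ^ (m + m)))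
    (fun i ↦ by positivity) (div_nonneg (Real.iSup_nonneg fun i ↦ norm_nonneg _) hq.le)
    (fun i k hk hkr ↦ by
      simp only [norm_mul, mul_pow, integral_const_mul]
      exact (mul_le_mul_of_nonneg_left (hmom i k hk hkr) (by positivity)).trans
        (pow_mul_one_div_le_s11 hk (norm_nonneg _) (haM i) hq (Nat.cast_nonneg N)))
    (by omega) (Fin.append (fun _ ↦ false) fun _ ↦ true)
  have hγ : ∑ i, ‖a i‖ ^ 2 / N = Real.sqrt ((1 / N) * ∑ i, ‖a i‖ ^ 2) ^ 2 := by
    rw [Real.sq_sqrt (by positivity), ← sum_div, one_div_mul_eq_div]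
  simp only [prod_conjIf_append_eq_norm_pow, integral_complex_ofReal, Complex.norm_real,
    Real.norm_eq_abs, hγ, ← pow_mul] at hbound
  exact (le_abs_self _).trans hbound

/-- Under the assumptions of the linear large deviation bound, the `r`-th moment satisfies
`E|∑ a_i X_i|^r ≤ ∑_{k=1}^{r/2} S(r,k) γ^{2k} ψ^{r−2k}` where
`γ = ((1/N)∑|a_i|²)^{1/2}` and `ψ = (max_i |a_i|)/q`. -/
theorem stmt_11 {Ω : Type*} [MeasurableSpace Ω] (μ : Measure Ω) [IsProbabilityMeasure μ]
    {N : ℕ} (r : ℕ) (hr : Even r) (hr2 : 2 ≤ r)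
    (q : ℝ) (hq1 : 1 ≤ q) (hqN : q ≤ Real.sqrt N)
    (X : Fin N → Ω → ℂ) (hmeas : ∀ i, Measurable (X i))
    (hindep : iIndepFun X μ)
    (hint : ∀ i, Integrable (X i) μ)
    (hmean : ∀ i, ∫ ω, X i ω ∂μ = 0)
    (hintk : ∀ i, ∀ k, 2 ≤ k → k ≤ r → Integrable (fun ω => ‖X i ω‖ ^ k) μ)
    (hmom : ∀ i, ∀ k, 2 ≤ k → k ≤ r →
      ∫ ω, ‖X i ω‖ ^ k ∂μ ≤ 1 / (N * q ^ (k - 2)))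
    (a : Fin N → ℂ) :
    ∫ ω, ‖∑ i, a i * X i ω‖ ^ r ∂μ
      ≤ ∑ k ∈ Finset.Icc 1 (r / 2), (stirling r k : ℝ) *
          Real.sqrt ((1 / N) * ∑ i, ‖a i‖ ^ 2) ^ (2 * k) *
          ((⨆ i, ‖a i‖) / q) ^ (r - 2 * k) :=
  stmt_11_general μ r hr hr2 q hq1 X hmeas hindep hmean hintk hmom a
end

section
/- (Quadratic diagonal large deviation bound) Let r ≥ 2 be even, 1 ≤ q ≤ √N, and let X₁,…,X_N be independent complex random variables with E X_i = 0 and E|X_i|^k ≤ 1/(N q^{k−2}) for 2 ≤ k ≤ 2r. Then for any deterministic a₁,…,a_N ∈ ℂ, ‖∑_i a_i (|X_i|² − E|X_i|²)‖_r ≤ 2 (1 + 2q²/N) (max_i |a_i|) · max(r/q², √(r/q²)). -/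
/-!
Write `Z_i = |X_i|² − E|X_i|²`, `x = q²/N ≤ 1` and `c = 1 + 2x`. Since `|a − b|^k ≤ a^k + b^k`
for `a, b ≥ 0`, `E|Z_i|^k ≤ E|X_i|^{2k} + (E|X_i|²)^k ≤ x (1 + x) q^{-2k} ≤ x (c/q²)^k`.

For `r = 2m`, `|∑ a_i Z_i|^r = (∑ a_i Z_i)^m (∑ conj(a_i) Z_i)^m` expands into a sum over maps
`p : {1,…,r} → {1,…,N}`. By independence and centering, `E ∏_t Z_{p t}` vanishes unless every
fibre of `p` has at least two points, and is then at most `x^s (c/q²)^r` with `s = |im p| ≤ m`.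
At most `C(N,s) s^r` maps have `s` values, and `C(N,s) x^s s^r ≤ q^{2s} s^r / s!`, which
`s^s/s! ≤ e^s` bounds by `(e/2)^m (q² M)^r` with `M = max(r/q², √(r/q²))`; summing over
`s ≤ m` costs a factor `(m + 1)(e/2)^m ≤ 2^r`.
-/

open MeasureTheory ProbabilityTheory Finset ComplexConjugate

lemma abs_sub_pow_le_pow_add_pow {a b : ℝ} (ha : 0 ≤ a) (hb : 0 ≤ b) (k : ℕ) :
    |a - b| ^ k ≤ a ^ k + b ^ k := by
  have hmax : |a - b| ≤ max a b := abs_sub_le_iff.mpr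
    ⟨by linarith [le_max_left a b], by linarith [le_max_right a b]⟩
  calc |a - b| ^ k ≤ max a b ^ k := pow_le_pow_left₀ (abs_nonneg _) hmax k
    _ ≤ a ^ k + b ^ k := by
      rcases le_total a b with h | h
      · rw [max_eq_right h]; linarith [pow_nonneg ha k]
      · rw [max_eq_left h]; linarith [pow_nonneg hb k]

lemma pow_le_max_sqrt_pow {t : ℝ} (ht : 0 ≤ t) {m n : ℕ} (hmn : m ≤ n) (hn : n ≤ 2 * m) :
    t ^ n ≤ max t √t ^ (2 * m) := by
  rcases le_total 1 t with h1 | h1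
  · calc t ^ n ≤ t ^ (2 * m) := pow_le_pow_right₀ h1 hn
      _ ≤ max t √t ^ (2 * m) := pow_le_pow_left₀ ht (le_max_left _ _) _
  · calc t ^ n ≤ t ^ m := pow_le_pow_of_le_one ht h1 hmn
      _ = √t ^ (2 * m) := by rw [pow_mul, Real.sq_sqrt ht]
      _ ≤ max t √t ^ (2 * m) := pow_le_pow_left₀ (Real.sqrt_nonneg t) (le_max_right _ _) _

lemma pow_mul_pow_div_factorial_le {q : ℝ} (hq : 0 < q) {m s : ℕ} (hs : s ≤ m) :
    (s : ℝ) ^ (2 * m) * (q ^ 2) ^ s / s.factorial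
      ≤ Real.exp m / 2 ^ m *
          (q ^ 2 * max ((2 * m : ℕ) / q ^ 2) √((2 * m : ℕ) / q ^ 2)) ^ (2 * m) := by
  set t : ℝ := (2 * m : ℕ) / q ^ 2
  obtain ⟨n, hn⟩ : ∃ n, 2 * m = s + n := ⟨2 * m - s, by omega⟩
  have hq2 : 0 < q ^ 2 := by positivity
  have hsplit : (s : ℝ) ^ (2 * m) * (q ^ 2) ^ s / s.factorial
      = (s : ℝ) ^ s / s.factorial * (s / q ^ 2) ^ n * (q ^ 2) ^ (2 * m) := by
    rw [hn, pow_add, pow_add, div_pow]; field_simp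
  have hfact : (s : ℝ) ^ s / s.factorial ≤ Real.exp m :=
    (Real.pow_div_factorial_le_exp _ (Nat.cast_nonneg s) s).trans
      (Real.exp_le_exp.mpr (by exact_mod_cast hs))
  have hratio : (s / q ^ 2 : ℝ) ^ n ≤ max t √t ^ (2 * m) / 2 ^ m := by
    have hst : (s / q ^ 2 : ℝ) ≤ t / 2 := by
      have ht2 : t / 2 = m / q ^ 2 := by simp only [t]; push_cast; ring
      rw [ht2]
      gcongr
    calc (s / q ^ 2 : ℝ) ^ n ≤ (t / 2) ^ n := pow_le_pow_left₀ (by positivity) hst n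
      _ = t ^ n / 2 ^ n := div_pow _ _ _
      _ ≤ max t √t ^ (2 * m) / 2 ^ m := by
        gcongr
        · exact pow_le_max_sqrt_pow (by positivity) (by omega) (by omega)
        · norm_num
        · omega
  rw [hsplit, mul_pow]
  calc (s : ℝ) ^ s / s.factorial * (s / q ^ 2) ^ n * (q ^ 2) ^ (2 * m)
      ≤ Real.exp m * (max t √t ^ (2 * m) / 2 ^ m) * (q ^ 2) ^ (2 * m) := by gcongr
    _ = _ := by ring

lemma sum_choose_mul_pow_le (N : ℕ) {q : ℝ} (hq : 0 < q) (m : ℕ) :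
    ∑ s ∈ range (m + 1), (N.choose s : ℝ) * (s : ℝ) ^ (2 * m) * (q ^ 2 / N) ^ s
      ≤ (2 * q ^ 2 * max ((2 * m : ℕ) / q ^ 2) √((2 * m : ℕ) / q ^ 2)) ^ (2 * m) := by
  set B : ℝ := q ^ 2 * max ((2 * m : ℕ) / q ^ 2) √((2 * m : ℕ) / q ^ 2)
  have hterm : ∀ s ∈ range (m + 1), (N.choose s : ℝ) * (s : ℝ) ^ (2 * m) * (q ^ 2 / N) ^ s
      ≤ Real.exp m / 2 ^ m * B ^ (2 * m) := by
    intro s hs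
    refine le_trans ?_ (pow_mul_pow_div_factorial_le hq (Nat.lt_succ_iff.mp (mem_range.mp hs)))
    have hchoose : (N.choose s : ℝ) * (q ^ 2 / N) ^ s ≤ (q ^ 2) ^ s / s.factorial := by
      calc (N.choose s : ℝ) * (q ^ 2 / N) ^ s ≤ (N : ℝ) ^ s / s.factorial * (q ^ 2 / N) ^ s :=
            by gcongr; exact Nat.choose_le_pow_div s N
        _ = (N * (q ^ 2 / N)) ^ s / s.factorial := by ring
        _ ≤ (q ^ 2) ^ s / s.factorial := by
          gcongr
          rcases eq_or_ne (N : ℝ) 0 with h | h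
          · simp [h]; positivity
          · rw [mul_div_cancel₀ _ h]
    calc (N.choose s : ℝ) * (s : ℝ) ^ (2 * m) * (q ^ 2 / N) ^ s
        = (s : ℝ) ^ (2 * m) * ((N.choose s : ℝ) * (q ^ 2 / N) ^ s) := by ring
      _ ≤ (s : ℝ) ^ (2 * m) * ((q ^ 2) ^ s / s.factorial) := by gcongr
      _ = _ := by ring
  have hcount : ((m + 1 : ℕ) : ℝ) ≤ 2 ^ m := by exact_mod_cast Nat.lt_two_pow_self
  have hexp : Real.exp m ≤ 4 ^ m := by
    rw [← Real.exp_one_pow]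
    exact pow_le_pow_left₀ (Real.exp_pos 1).le (by linarith [Real.exp_one_lt_d9]) m
  calc _ ≤ ∑ s ∈ range (m + 1), Real.exp m / 2 ^ m * B ^ (2 * m) := sum_le_sum hterm
    _ = ((m + 1 : ℕ) : ℝ) * Real.exp m / 2 ^ m * B ^ (2 * m) := by
      rw [sum_const, card_range, nsmul_eq_mul]; ring
    _ ≤ 2 ^ m * 4 ^ m / 2 ^ m * B ^ (2 * m) := by gcongr
    _ = 4 ^ m * B ^ (2 * m) := by field_simp
    _ = (2 * B) ^ (2 * m) := by rw [mul_pow (2 : ℝ) B, pow_mul (2 : ℝ) 2 m]; norm_num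
    _ = _ := by simp only [B, mul_assoc]

lemma card_filter_card_image_eq_le {ι κ : Type*} [Fintype ι] [DecidableEq ι] [Fintype κ]
    [DecidableEq κ] (s : ℕ) :
    #{p : ι → κ | #(univ.image p) = s} ≤ (Fintype.card κ).choose s * s ^ Fintype.card ι := by
  calc #{p : ι → κ | #(univ.image p) = s}
      ≤ #((powersetCard s (univ : Finset κ)).biUnion fun T ↦ Fintype.piFinset fun _ : ι ↦ T) := by
        refine card_le_card fun p hp ↦ mem_biUnion.mpr ⟨univ.image p, ?_, ?_⟩
        · exact mem_powersetCard.mpr ⟨subset_univ _, (mem_filter.mp hp).2⟩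
        · exact Fintype.mem_piFinset.mpr fun t ↦ mem_image_of_mem p (mem_univ t)
    _ ≤ ∑ T ∈ powersetCard s (univ : Finset κ), #(Fintype.piFinset fun _ : ι ↦ T) := card_biUnion_le
    _ = (Fintype.card κ).choose s * s ^ Fintype.card ι := by
      rw [sum_congr rfl fun T hT ↦ by
        rw [Fintype.card_piFinset, prod_const, (mem_powersetCard.mp hT).2, card_univ], sum_const,
        card_powersetCard, card_univ, smul_eq_mul]

lemma two_mul_card_image_le_s12 {ι κ : Type*} [Fintype ι] [DecidableEq κ] (p : ι → κ)
    (hp : ∀ j, #{t | p t = j} ≠ 1) : 2 * #(univ.image p) ≤ Fintype.card ι := by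
  calc 2 * #(univ.image p) = ∑ _j ∈ univ.image p, 2 := by rw [sum_const, smul_eq_mul, mul_comm]
    _ ≤ ∑ j ∈ univ.image p, #{t | p t = j} := by
      refine sum_le_sum fun j hj ↦ ?_
      obtain ⟨t, -, rfl⟩ := mem_image.mp hj
      have : 0 < #{t' | p t' = p t} := card_pos.mpr ⟨t, by simp⟩
      have := hp (p t)
      omega
    _ = Fintype.card ι := (card_eq_sum_card_image p univ).symm

lemma ofReal_norm_pow_two_mul_eq_prod (w : ℂ) (m : ℕ) :
    ((‖w‖ ^ (2 * m) : ℝ) : ℂ) = ∏ bt : Bool × Fin m, if bt.1 then w else conj w := by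
  rw [Fintype.prod_prod_type, Fintype.prod_bool]
  simp only [if_true, Bool.false_eq_true, if_false, prod_const, card_univ, Fintype.card_fin]
  rw [← mul_pow, Complex.mul_conj, Complex.normSq_eq_norm_sq, pow_mul]
  push_cast
  ring

section Centering

variable {Ω : Type*} [MeasurableSpace Ω] {μ : Measure Ω} {V : Ω → ℝ}

lemma integrable_abs_sq_sub_pow [IsFiniteMeasure μ] (hVm : AEStronglyMeasurable V μ)
    {b : ℝ} (hb : 0 ≤ b) {k : ℕ} (hint : Integrable (fun ω ↦ V ω ^ (2 * k)) μ) :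
    Integrable (fun ω ↦ |V ω ^ 2 - b| ^ k) μ := by
  refine (hint.add (integrable_const (b ^ k))).mono' (by fun_prop) (ae_of_all _ fun ω ↦ ?_)
  simpa only [Real.norm_eq_abs, abs_pow, abs_abs, pow_mul, Pi.add_apply]
    using abs_sub_pow_le_pow_add_pow (sq_nonneg (V ω)) hb k

lemma memLp_sq_sub [IsFiniteMeasure μ] (hVm : AEStronglyMeasurable V μ) {b : ℝ} (hb : 0 ≤ b)
    {k : ℕ} (hk : k ≠ 0) (hint : Integrable (fun ω ↦ V ω ^ (2 * k)) μ) :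
    MemLp (fun ω ↦ V ω ^ 2 - b) k μ := by
  refine (integrable_norm_rpow_iff (by fun_prop) (by simpa using hk) (by simp)).mp ?_
  simpa [Real.norm_eq_abs] using integrable_abs_sq_sub_pow hVm hb hint

lemma integral_abs_sq_sub_integral_pow_le [IsProbabilityMeasure μ]
    (hVm : AEStronglyMeasurable V μ) {N q : ℝ} (hq : 0 < q) (hqN : q ^ 2 ≤ N) {k : ℕ} (hk : 2 ≤ k)
    (hint : Integrable (fun ω ↦ V ω ^ (2 * k)) μ) (h2 : ∫ ω, V ω ^ 2 ∂μ ≤ 1 / N)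
    (h2k : ∫ ω, V ω ^ (2 * k) ∂μ ≤ 1 / (N * q ^ (2 * k - 2))) :
    ∫ ω, |V ω ^ 2 - ∫ ω', V ω' ^ 2 ∂μ| ^ k ∂μ
      ≤ q ^ 2 / N * ((1 + 2 * q ^ 2 / N) / q ^ 2) ^ k := by
  set b := ∫ ω', V ω' ^ 2 ∂μ
  set x := q ^ 2 / N
  have hN : 0 < N := (pow_pos hq 2).trans_le hqN
  have hb : 0 ≤ b := integral_nonneg fun ω ↦ sq_nonneg _
  have hx : 0 ≤ x := by positivity
  have hx1 : x ≤ 1 := (div_le_one hN).mpr hqN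
  have hmain : ∫ ω, V ω ^ (2 * k) ∂μ ≤ x * (1 / q ^ 2) ^ k := by
    convert h2k using 1
    obtain ⟨j, rfl⟩ : ∃ j, k = j + 1 := ⟨k - 1, by omega⟩
    rw [show 2 * (j + 1) - 2 = 2 * j by omega, pow_mul]
    simp only [x, one_div, inv_pow, pow_succ]
    field_simp
  have hcenter : b ^ k ≤ x ^ 2 * (1 / q ^ 2) ^ k := by
    calc b ^ k ≤ (1 / N) ^ k := pow_le_pow_left₀ hb h2 k
      _ = x ^ k * (1 / q ^ 2) ^ k := by rw [← mul_pow]; simp only [x]; field_simp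
      _ ≤ x ^ 2 * (1 / q ^ 2) ^ k :=
        mul_le_mul_of_nonneg_right (pow_le_pow_of_le_one hx hx1 hk) (by positivity)
  calc ∫ ω, |V ω ^ 2 - b| ^ k ∂μ ≤ ∫ ω, (V ω ^ (2 * k) + b ^ k) ∂μ := by
        refine integral_mono (integrable_abs_sq_sub_pow hVm hb hint)
          (hint.add (integrable_const _)) fun ω ↦ ?_
        simpa only [pow_mul] using abs_sub_pow_le_pow_add_pow (sq_nonneg (V ω)) hb k
    _ = ∫ ω, V ω ^ (2 * k) ∂μ + b ^ k := by
        rw [integral_add hint (integrable_const _), integral_const, probReal_univ, one_smul]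
    _ ≤ x * (1 + x) * (1 / q ^ 2) ^ k := by nlinarith
    _ ≤ x * (1 + 2 * x) ^ k * (1 / q ^ 2) ^ k := by
        gcongr
        exact (by linarith : 1 + x ≤ 1 + 2 * x).trans (le_self_pow₀ (by linarith) (by omega))
    _ = x * ((1 + 2 * x) / q ^ 2) ^ k := by rw [div_eq_mul_one_div (1 + 2 * x), mul_pow]; ring
    _ = _ := by rw [mul_div_assoc]

end Centering

section Moments

variable {Ω ι κ : Type*} [MeasurableSpace Ω] {μ : Measure Ω} [Fintype ι] {Z : κ → Ω → ℝ}

lemma integral_prod_comp_eq_prod [Fintype κ] [DecidableEq κ] (hZ : iIndepFun Z μ)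
    (hm : ∀ j, AEMeasurable (Z j) μ) (p : ι → κ) :
    ∫ ω, ∏ t, Z (p t) ω ∂μ = ∏ j, ∫ ω, Z j ω ^ #{t | p t = j} ∂μ := by
  have hfiber : ∀ ω, ∏ t, Z (p t) ω = ∏ j, Z j ω ^ #{t | p t = j} := fun ω ↦ by
    rw [← prod_fiberwise' univ p fun j ↦ Z j ω]
    simp only [prod_const]
  simp_rw [hfiber]
  exact hZ.integral_fun_prod_comp (f := fun j x ↦ x ^ #{t | p t = j}) hm
    fun j ↦ (measurable_id.pow_const _).aestronglyMeasurable

lemma integral_prod_comp_eq_zero [Fintype κ] [DecidableEq κ] (hZ : iIndepFun Z μ)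
    (hm : ∀ j, AEMeasurable (Z j) μ) (hmean : ∀ j, ∫ ω, Z j ω ∂μ = 0) (p : ι → κ)
    (hp : ∃ j, #{t | p t = j} = 1) :
    ∫ ω, ∏ t, Z (p t) ω ∂μ = 0 := by
  obtain ⟨j, hj⟩ := hp
  rw [integral_prod_comp_eq_prod hZ hm]
  exact prod_eq_zero (mem_univ j) (by simpa [hj] using hmean j)

lemma abs_integral_prod_comp_le [Fintype κ] [DecidableEq κ] [IsProbabilityMeasure μ]
    (hZ : iIndepFun Z μ) (hm : ∀ j, AEMeasurable (Z j) μ) {x y : ℝ}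
    (hmom : ∀ j k, 2 ≤ k → k ≤ Fintype.card ι → ∫ ω, |Z j ω| ^ k ∂μ ≤ x * y ^ k)
    (p : ι → κ) (hp : ∀ j, #{t | p t = j} ≠ 1) :
    |∫ ω, ∏ t, Z (p t) ω ∂μ| ≤ x ^ #(univ.image p) * y ^ Fintype.card ι := by
  have hout : ∀ j ∈ univ, j ∉ univ.image p → |∫ ω, Z j ω ^ #{t | p t = j} ∂μ| = 1 := by
    intro j _ hj
    have : #{t | p t = j} = 0 := card_eq_zero.mpr <| filter_eq_empty_iff.mpr fun t _ h ↦
      hj (h ▸ mem_image_of_mem p (mem_univ t))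
    simp [this]
  have hin : ∀ j ∈ univ.image p, |∫ ω, Z j ω ^ #{t | p t = j} ∂μ| ≤ x * y ^ #{t | p t = j} := by
    intro j hj
    obtain ⟨t, -, rfl⟩ := mem_image.mp hj
    have hpos : 0 < #{t' | p t' = p t} := card_pos.mpr ⟨t, by simp⟩
    calc |∫ ω, Z (p t) ω ^ #{t' | p t' = p t} ∂μ|
        ≤ ∫ ω, |Z (p t) ω ^ #{t' | p t' = p t}| ∂μ := abs_integral_le_integral_abs
      _ = ∫ ω, |Z (p t) ω| ^ #{t' | p t' = p t} ∂μ := by simp_rw [abs_pow]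
      _ ≤ _ := hmom _ _ (by have := hp (p t); omega) (card_filter_le _ _)
  rw [integral_prod_comp_eq_prod hZ hm, abs_prod,
    ← prod_subset (subset_univ (univ.image p)) hout]
  calc ∏ j ∈ univ.image p, |∫ ω, Z j ω ^ #{t | p t = j} ∂μ|
      ≤ ∏ j ∈ univ.image p, x * y ^ #{t | p t = j} :=
        prod_le_prod (fun _ _ ↦ abs_nonneg _) hin
    _ = x ^ #(univ.image p) * y ^ Fintype.card ι := by
      rw [prod_mul_distrib, prod_const, prod_pow_eq_pow_sum, ← card_eq_sum_card_image,
        card_univ]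

lemma sum_abs_integral_prod_comp_le [Fintype κ] [DecidableEq κ] [IsProbabilityMeasure μ]
    [DecidableEq ι] (hZ : iIndepFun Z μ) (hm : ∀ j, AEMeasurable (Z j) μ)
    (hmean : ∀ j, ∫ ω, Z j ω ∂μ = 0) {x y : ℝ} (hx : 0 ≤ x) (hy : 0 ≤ y)
    (hmom : ∀ j k, 2 ≤ k → k ≤ Fintype.card ι → ∫ ω, |Z j ω| ^ k ∂μ ≤ x * y ^ k) :
    ∑ p : ι → κ, |∫ ω, ∏ t, Z (p t) ω ∂μ|
      ≤ y ^ Fintype.card ι * ∑ s ∈ range (Fintype.card ι / 2 + 1),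
          ((Fintype.card κ).choose s : ℝ) * (s : ℝ) ^ Fintype.card ι * x ^ s := by
  set paired : Finset (ι → κ) := {p | ∀ j, #{t | p t = j} ≠ 1}
  have hmaps : ∀ p ∈ paired, #(univ.image p) ∈ range (Fintype.card ι / 2 + 1) := fun p hp ↦ by
    have := two_mul_card_image_le_s12 p (mem_filter.mp hp).2
    rw [mem_range]
    omega
  calc ∑ p : ι → κ, |∫ ω, ∏ t, Z (p t) ω ∂μ|
      = ∑ p ∈ paired, |∫ ω, ∏ t, Z (p t) ω ∂μ| := by
        refine (sum_filter_of_ne fun p _ hp ↦ ?_).symm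
        by_contra hbad
        obtain ⟨j, hj⟩ := not_forall.mp hbad
        exact hp (by rw [integral_prod_comp_eq_zero hZ hm hmean p ⟨j, not_not.mp hj⟩, abs_zero])
    _ ≤ ∑ p ∈ paired, x ^ #(univ.image p) * y ^ Fintype.card ι :=
        sum_le_sum fun p hp ↦ abs_integral_prod_comp_le hZ hm hmom p (mem_filter.mp hp).2
    _ = ∑ s ∈ range (Fintype.card ι / 2 + 1), ∑ p ∈ paired with #(univ.image p) = s,
          x ^ s * y ^ Fintype.card ι :=
        (sum_fiberwise_of_maps_to' hmaps fun s ↦ x ^ s * y ^ Fintype.card ι).symm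
    _ ≤ ∑ s ∈ range (Fintype.card ι / 2 + 1),
          ((Fintype.card κ).choose s * s ^ Fintype.card ι : ℕ) * (x ^ s * y ^ Fintype.card ι) := by
        refine sum_le_sum fun s _ ↦ ?_
        rw [sum_const, nsmul_eq_mul]
        gcongr
        exact_mod_cast (card_le_card (filter_subset_filter _ (subset_univ paired))).trans
          (card_filter_card_image_eq_le s)
    _ = _ := by rw [mul_sum]; push_cast; exact sum_congr rfl fun s _ ↦ by ring

lemma integrable_prod_comp [IsFiniteMeasure μ] (hZ : ∀ j, MemLp (Z j) (Fintype.card ι) μ)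
    (p : ι → κ) : Integrable (fun ω ↦ ∏ t, Z (p t) ω) μ := by
  rcases isEmpty_or_nonempty ι with hι | hι
  · simp
  rw [← memLp_one_iff_integrable]
  convert MemLp.prod' (s := univ) (p := fun _ ↦ (Fintype.card ι : ENNReal)) fun t _ ↦ hZ (p t)
  rw [sum_const, card_univ, nsmul_eq_mul, ENNReal.mul_inv_cancel (by simp) (by simp), inv_one]

lemma norm_integral_prod_sum_le_s12 [Fintype κ] [IsFiniteMeasure μ] [DecidableEq ι] {A : ℝ}
    (β : ι → κ → ℂ) (hβ : ∀ t j, ‖β t j‖ ≤ A) (hZ : ∀ j, MemLp (Z j) (Fintype.card ι) μ) :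
    ‖∫ ω, ∏ t, ∑ j, β t j * Z j ω ∂μ‖
      ≤ A ^ Fintype.card ι * ∑ p : ι → κ, |∫ ω, ∏ t, Z (p t) ω ∂μ| := by
  have hexpand : ∀ ω, ∏ t, ∑ j, β t j * Z j ω
      = ∑ p : ι → κ, (∏ t, β t (p t)) * ((∏ t, Z (p t) ω : ℝ) : ℂ) := fun ω ↦ by
    rw [Fintype.prod_sum]
    push_cast
    simp only [prod_mul_distrib]
  have hterm : ∀ p : ι → κ,
      Integrable (fun ω ↦ (∏ t, β t (p t)) * ((∏ t, Z (p t) ω : ℝ) : ℂ)) μ :=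
    fun p ↦ (integrable_prod_comp hZ p).ofReal.const_mul _
  simp_rw [hexpand]
  rw [integral_finsetSum _ fun p _ ↦ hterm p, mul_sum]
  refine (norm_sum_le _ _).trans (sum_le_sum fun p _ ↦ ?_)
  rw [integral_const_mul, integral_complex_ofReal, norm_mul, Complex.norm_real, Real.norm_eq_abs,
    norm_prod]
  gcongr
  calc ∏ t, ‖β t (p t)‖ ≤ ∏ _t : ι, A := prod_le_prod (fun _ _ ↦ norm_nonneg _) fun t _ ↦ hβ t _
    _ = A ^ Fintype.card ι := by rw [prod_const, card_univ]

lemma integral_norm_sum_mul_pow_le_s12 [Fintype κ] [IsFiniteMeasure μ] {A : ℝ} (a : κ → ℂ)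
    (ha : ∀ j, ‖a j‖ ≤ A) (m : ℕ) (hZ : ∀ j, MemLp (Z j) (2 * m : ℕ) μ) :
    ∫ ω, ‖∑ j, a j * Z j ω‖ ^ (2 * m) ∂μ
      ≤ A ^ (2 * m) * ∑ p : Bool × Fin m → κ, |∫ ω, ∏ t, Z (p t) ω ∂μ| := by
  have hcard : Fintype.card (Bool × Fin m) = 2 * m := by simp
  set β : Bool × Fin m → κ → ℂ := fun bt j ↦ if bt.1 then a j else conj (a j)
  have hprod : ∀ ω, ((‖∑ j, a j * Z j ω‖ ^ (2 * m) : ℝ) : ℂ) = ∏ bt, ∑ j, β bt j * Z j ω := by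
    intro ω
    rw [ofReal_norm_pow_two_mul_eq_prod]
    refine prod_congr rfl fun ⟨b, t⟩ _ ↦ ?_
    cases b <;> simp [β, map_sum]
  calc ∫ ω, ‖∑ j, a j * Z j ω‖ ^ (2 * m) ∂μ
      = ‖∫ ω, ((‖∑ j, a j * Z j ω‖ ^ (2 * m) : ℝ) : ℂ) ∂μ‖ := by
        rw [integral_complex_ofReal, Complex.norm_real, Real.norm_of_nonneg
          (integral_nonneg fun ω ↦ by positivity)]
    _ ≤ A ^ (2 * m) * ∑ p : Bool × Fin m → κ, |∫ ω, ∏ t, Z (p t) ω ∂μ| := by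
      simp_rw [hprod]
      rw [← hcard]
      exact norm_integral_prod_sum_le_s12 β (fun bt j ↦ by dsimp only [β]; split_ifs <;> simp [ha])
        (hcard ▸ hZ)

lemma integral_norm_sum_mul_pow_le_of_moments [Fintype κ] [DecidableEq κ] [IsProbabilityMeasure μ]
    (hZ : iIndepFun Z μ) (hmean : ∀ j, ∫ ω, Z j ω ∂μ = 0) {q c A : ℝ} (hq : 0 < q) (hc : 0 ≤ c)
    (a : κ → ℂ) (ha : ∀ j, ‖a j‖ ≤ A) (m : ℕ) (hLp : ∀ j, MemLp (Z j) (2 * m : ℕ) μ)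
    (hmom : ∀ j k, 2 ≤ k → k ≤ 2 * m →
      ∫ ω, |Z j ω| ^ k ∂μ ≤ q ^ 2 / Fintype.card κ * (c / q ^ 2) ^ k) :
    ∫ ω, ‖∑ j, a j * Z j ω‖ ^ (2 * m) ∂μ
      ≤ (2 * c * A * max ((2 * m : ℕ) / q ^ 2) √((2 * m : ℕ) / q ^ 2)) ^ (2 * m) := by
  have hcard : Fintype.card (Bool × Fin m) = 2 * m := by simp
  have hA : 0 ≤ A ^ (2 * m) := by rw [pow_mul]; positivity
  have hsum := sum_abs_integral_prod_comp_le (ι := Bool × Fin m) hZ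
    (fun j ↦ (hLp j).aestronglyMeasurable.aemeasurable) hmean (by positivity) (by positivity)
    (hcard ▸ hmom)
  rw [hcard, Nat.mul_div_cancel_left m two_pos] at hsum
  calc ∫ ω, ‖∑ j, a j * Z j ω‖ ^ (2 * m) ∂μ
      ≤ A ^ (2 * m) * ∑ p : Bool × Fin m → κ, |∫ ω, ∏ t, Z (p t) ω ∂μ| :=
        integral_norm_sum_mul_pow_le_s12 a ha m hLp
    _ ≤ A ^ (2 * m) * ((c / q ^ 2) ^ (2 * m) *
          (2 * q ^ 2 * max ((2 * m : ℕ) / q ^ 2) √((2 * m : ℕ) / q ^ 2)) ^ (2 * m)) := by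
        gcongr
        exact hsum.trans (by gcongr; exact sum_choose_mul_pow_le _ hq m)
    _ = _ := by
        rw [← mul_pow, ← mul_pow]
        congr 1
        field_simp

end Moments

theorem stmt_12_general {Ω : Type*} [MeasurableSpace Ω] (μ : Measure Ω) [IsProbabilityMeasure μ]
    {N : ℕ} (r : ℕ) (hr : Even r) (hr2 : 2 ≤ r)
    (q : ℝ) (hq1 : 1 ≤ q) (hqN : q ≤ Real.sqrt N)
    (X : Fin N → Ω → ℂ) (hmeas : ∀ i, Measurable (X i))
    (hindep : iIndepFun X μ)
    (hintk : ∀ i, ∀ k, 2 ≤ k → k ≤ 2 * r → Integrable (fun ω => ‖X i ω‖ ^ k) μ)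
    (hmom : ∀ i, ∀ k, 2 ≤ k → k ≤ 2 * r →
      ∫ ω, ‖X i ω‖ ^ k ∂μ ≤ 1 / (N * q ^ (k - 2)))
    (a : Fin N → ℂ) :
    (∫ ω, ‖∑ i, a i *
          ((‖X i ω‖ ^ 2 - ∫ ω', ‖X i ω'‖ ^ 2 ∂μ : ℝ) : ℂ)‖ ^ r ∂μ)
        ^ ((1 : ℝ) / r)
      ≤ 2 * (1 + 2 * q ^ 2 / N) * (⨆ i, ‖a i‖) *
          max (r / q ^ 2) (Real.sqrt (r / q ^ 2)) := by
  obtain ⟨m, hm⟩ := hr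
  rw [← two_mul] at hm
  subst hm
  have hq : 0 < q := by linarith
  have hqN2 : q ^ 2 ≤ N := by
    simpa [Real.sq_sqrt (Nat.cast_nonneg N)] using pow_le_pow_left₀ hq.le hqN 2
  set Z : Fin N → Ω → ℝ := fun i ω ↦ ‖X i ω‖ ^ 2 - ∫ ω', ‖X i ω'‖ ^ 2 ∂μ
  have hV : ∀ i, AEStronglyMeasurable (fun ω ↦ ‖X i ω‖) μ := fun i ↦ by fun_prop
  have hZ : iIndepFun Z μ :=
    hindep.comp (fun i x ↦ ‖x‖ ^ 2 - ∫ ω', ‖X i ω'‖ ^ 2 ∂μ) fun i ↦ by fun_prop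
  have hZmean : ∀ i, ∫ ω, Z i ω ∂μ = 0 := fun i ↦ by
    simp [Z, integral_sub (hintk i 2 le_rfl (by omega)) (integrable_const _)]
  have hLp : ∀ i, MemLp (Z i) (2 * m : ℕ) μ := fun i ↦
    memLp_sq_sub (hV i) (integral_nonneg fun ω ↦ by positivity) (by omega)
      (hintk i _ (by omega) (by omega))
  have hmomZ : ∀ i k, 2 ≤ k → k ≤ 2 * m →
      ∫ ω, |Z i ω| ^ k ∂μ ≤ q ^ 2 / Fintype.card (Fin N) * ((1 + 2 * q ^ 2 / N) / q ^ 2) ^ k :=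
    fun i k hk hkm ↦ by
      simpa using integral_abs_sq_sub_integral_pow_le (hV i) hq hqN2 hk
        (hintk i _ (by omega) (by omega)) (by simpa using hmom i 2 le_rfl (by omega))
        (hmom i _ (by omega) (by omega))
  have hA : ∀ i, ‖a i‖ ≤ ⨆ i, ‖a i‖ := le_ciSup (Set.finite_range _).bddAbove
  have hA0 : 0 ≤ ⨆ i, ‖a i‖ := Real.iSup_nonneg fun i ↦ norm_nonneg (a i)
  rw [one_div, Real.rpow_inv_le_iff_of_pos (integral_nonneg fun ω ↦ by positivity)
    (by positivity) (by positivity), Real.rpow_natCast]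
  exact integral_norm_sum_mul_pow_le_of_moments hZ hZmean hq (by positivity) a hA m hLp hmomZ

/-- Quadratic diagonal large deviation bound: for independent centered `X_i` with
`E|X_i|^k ≤ 1/(N q^{k−2})` for `2 ≤ k ≤ 2r` (`r ≥ 2` even, `1 ≤ q ≤ √N`) and deterministic
`a_i`, `‖∑ a_i (|X_i|² − E|X_i|²)‖_r ≤ 2 (1 + 2q²/N) (max |a_i|) max(r/q², √(r/q²))`. -/
theorem stmt_12 {Ω : Type*} [MeasurableSpace Ω] (μ : Measure Ω) [IsProbabilityMeasure μ]
    {N : ℕ} (r : ℕ) (hr : Even r) (hr2 : 2 ≤ r)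
    (q : ℝ) (hq1 : 1 ≤ q) (hqN : q ≤ Real.sqrt N)
    (X : Fin N → Ω → ℂ) (hmeas : ∀ i, Measurable (X i))
    (hindep : iIndepFun X μ)
    (hint : ∀ i, Integrable (X i) μ)
    (hmean : ∀ i, ∫ ω, X i ω ∂μ = 0)
    (hintk : ∀ i, ∀ k, 2 ≤ k → k ≤ 2 * r → Integrable (fun ω => ‖X i ω‖ ^ k) μ)
    (hmom : ∀ i, ∀ k, 2 ≤ k → k ≤ 2 * r →
      ∫ ω, ‖X i ω‖ ^ k ∂μ ≤ 1 / (N * q ^ (k - 2)))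
    (a : Fin N → ℂ) :
    (∫ ω, ‖∑ i, a i *
          ((‖X i ω‖ ^ 2 - ∫ ω', ‖X i ω'‖ ^ 2 ∂μ : ℝ) : ℂ)‖ ^ r ∂μ)
        ^ ((1 : ℝ) / r)
      ≤ 2 * (1 + 2 * q ^ 2 / N) * (⨆ i, ‖a i‖) *
          max (r / q ^ 2) (Real.sqrt (r / q ^ 2)) :=
  stmt_12_general μ r hr hr2 q hq1 hqN X hmeas hindep hintk hmom a
end

section
/- For independent complex random variables X with E|X|^k ≤ 1/(N q^{k−2}) for all 2 ≤ k ≤ 2r (r a positive integer, q ≥ 1, N ≥ 1), we have E(|X|² − E|X|²)^r ≤ (1/(N q^{2r−2})) · (1 + 2q²/N)^r. -/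
/-!
Expand `(|X|² − m)^r`, `m = E|X|²`, binomially, so that the centred moment becomes
`∑ⱼ C(r,j) E|X|^{2j} (−m)^{r−j}`. Since `0 ≤ m ≤ 1/N`, for `j ≥ 2` the `j`-th term is at most
`C(r,j) / (N q^{2j−2} N^{r−j})`, which is `2^{−(r−j)}` times the `j`-th term of the binomial
expansion of `(1/(N q^{2r−2})) (1 + 2q²/N)^r`. The terms `j = 0, 1` do not compare individually;
together they equal `(1 − r)(−m)^r ≤ r m^r`, which is dominated by the `j = 1` term of the bound.
-/

open MeasureTheory Finset

lemma neg_pow_le_pow {m : ℝ} (hm : 0 ≤ m) (n : ℕ) : (-m) ^ n ≤ m ^ n := by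
  simpa [abs_pow, abs_of_nonneg hm] using le_abs_self ((-m) ^ n)

lemma integral_sub_const_pow {Ω : Type*} [MeasurableSpace Ω] {μ : Measure Ω} {g : Ω → ℝ}
    {r : ℕ} (hg : ∀ j ≤ r, Integrable (fun ω => g ω ^ j) μ) (m : ℝ) :
    ∫ ω, (g ω - m) ^ r ∂μ
      = ∑ j ∈ range (r + 1), (∫ ω, g ω ^ j ∂μ) * (-m) ^ (r - j) * (r.choose j : ℝ) := by
  simp_rw [sub_eq_add_neg, add_pow]
  rw [integral_finsetSum]
  · simp_rw [integral_mul_const]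
  · intro j hj
    exact ((hg j (Nat.lt_succ_iff.mp (mem_range.mp hj))).mul_const _).mul_const _

lemma one_div_mul_one_div_pow_le {N q : ℝ} (hN : 0 < N) (hq : 0 < q) {k : ℕ} (hk : 1 ≤ k)
    (i : ℕ) :
    1 / (N * q ^ (2 * k - 2)) * (1 / N) ^ i
      ≤ 1 / (N * q ^ (2 * (k + i) - 2)) * (2 * q ^ 2 / N) ^ i := by
  have hexp : 2 * (k + i) - 2 = (2 * k - 2) + 2 * i := by omega
  have hfactor : 1 / (N * q ^ (2 * (k + i) - 2)) * (2 * q ^ 2 / N) ^ i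
      = 2 ^ i * (1 / (N * q ^ (2 * k - 2)) * (1 / N) ^ i) := by
    rw [hexp, pow_add, pow_mul, div_pow, mul_pow, one_div_pow]
    field_simp
  rw [hfactor]
  exact le_mul_of_one_le_left (by positivity) (one_le_pow₀ one_le_two)

lemma moment_mul_pow_le {N q a m : ℝ} (hN : 0 < N) (hq : 0 < q) {j r : ℕ} (hj : 1 ≤ j)
    (hjr : j ≤ r) (ha : a ≤ 1 / (N * q ^ (2 * j - 2))) (hm0 : 0 ≤ m) (hmN : m ≤ 1 / N) :
    a * m ^ (r - j) ≤ 1 / (N * q ^ (2 * r - 2)) * (2 * q ^ 2 / N) ^ (r - j) := by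
  calc a * m ^ (r - j) ≤ 1 / (N * q ^ (2 * j - 2)) * (1 / N) ^ (r - j) :=
        mul_le_mul ha (pow_le_pow_left₀ hm0 hmN _) (by positivity) (by positivity)
    _ ≤ _ := by
        simpa only [Nat.add_sub_cancel' hjr] using one_div_mul_one_div_pow_le hN hq hj (r - j)

lemma sum_moment_mul_neg_pow_le {N q m : ℝ} (hN : 0 < N) (hq : 0 < q) {r : ℕ} (hr : 1 ≤ r)
    (A : ℕ → ℝ) (hA0 : A 0 = 1) (hA1 : A 1 = m) (hA_nonneg : ∀ j, 0 ≤ A j)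
    (hA_le : ∀ j, 1 ≤ j → j ≤ r → A j ≤ 1 / (N * q ^ (2 * j - 2))) :
    ∑ j ∈ range (r + 1), A j * (-m) ^ (r - j) * (r.choose j : ℝ)
      ≤ 1 / (N * q ^ (2 * r - 2)) * (1 + 2 * q ^ 2 / N) ^ r := by
  set c := 1 / (N * q ^ (2 * r - 2))
  set b := 2 * q ^ 2 / N
  have hm0 : 0 ≤ m := hA1 ▸ hA_nonneg 1
  have hmN : m ≤ 1 / N := by simpa [hA1] using hA_le 1 le_rfl hr
  obtain ⟨s, rfl⟩ : ∃ s, r = s + 1 := ⟨r - 1, by omega⟩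
  rw [add_pow, mul_sum]
  simp only [one_pow, one_mul, sum_range_succ' _ (s + 1), sum_range_succ' _ s, zero_add,
    Nat.choose_zero_right, Nat.cast_one, mul_one, Nat.sub_zero, Nat.add_sub_cancel]
  have htail : ∀ j ∈ range s,
      A (j + 1 + 1) * (-m) ^ (s + 1 - (j + 1 + 1)) * ((s + 1).choose (j + 1 + 1))
        ≤ c * (b ^ (s + 1 - (j + 1 + 1)) * ((s + 1).choose (j + 1 + 1))) := by
    intro j hj
    have hjs := mem_range.mp hj
    rw [← mul_assoc]
    refine mul_le_mul_of_nonneg_right ?_ (Nat.cast_nonneg _)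
    calc A (j + 1 + 1) * (-m) ^ (s + 1 - (j + 1 + 1))
        ≤ A (j + 1 + 1) * m ^ (s + 1 - (j + 1 + 1)) :=
          mul_le_mul_of_nonneg_left (neg_pow_le_pow hm0 _) (hA_nonneg _)
      _ ≤ c * b ^ (s + 1 - (j + 1 + 1)) :=
          moment_mul_pow_le hN hq (by omega) (by omega) (hA_le _ (by omega) (by omega)) hm0 hmN
  have hhead : A 1 * (-m) ^ s * ((s + 1).choose 1) + A 0 * (-m) ^ (s + 1)
      ≤ c * (b ^ s * ((s + 1).choose 1)) + c * b ^ (s + 1) := by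
    have hmpow : m * m ^ s ≤ c * b ^ s := by
      simpa only [Nat.add_sub_cancel] using
        moment_mul_pow_le (a := m) hN hq le_rfl hr (by simpa using hmN) hm0 hmN
    have hneg := mul_le_mul_of_nonneg_left (neg_pow_le_pow hm0 s) hm0
    simp only [hA0, hA1, Nat.choose_one_right, pow_succ]
    push_cast
    nlinarith [show 0 ≤ c * (b ^ s * b) by positivity, mul_nonneg hm0 (pow_nonneg hm0 s)]
  linarith [sum_le_sum htail]

theorem stmt_13_general {Ω : Type*} [MeasurableSpace Ω] (μ : Measure Ω) [IsProbabilityMeasure μ]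
    (r : ℕ) (hr : 1 ≤ r) (q N : ℝ) (hq : 1 ≤ q) (hN : 1 ≤ N)
    (X : Ω → ℂ)
    (hintk : ∀ k, 2 ≤ k → k ≤ 2 * r → Integrable (fun ω => ‖X ω‖ ^ k) μ)
    (hmom : ∀ k, 2 ≤ k → k ≤ 2 * r →
      ∫ ω, ‖X ω‖ ^ k ∂μ ≤ 1 / (N * q ^ (k - 2))) :
    ∫ ω, (‖X ω‖ ^ 2 - ∫ ω', ‖X ω'‖ ^ 2 ∂μ) ^ r ∂μ
      ≤ 1 / (N * q ^ (2 * r - 2)) * (1 + 2 * q ^ 2 / N) ^ r := by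
  have hint : ∀ j ≤ r, Integrable (fun ω => (‖X ω‖ ^ 2) ^ j) μ := by
    intro j hj
    rcases Nat.eq_zero_or_pos j with rfl | hj0
    · simp
    · simpa only [← pow_mul] using hintk (2 * j) (by omega) (by omega)
  rw [integral_sub_const_pow hint]
  simp only [← pow_mul]
  refine sum_moment_mul_neg_pow_le (by linarith) (by linarith) hr _ (by simp) (by simp)
    (fun j => integral_nonneg fun ω => by positivity) fun j hj hjr => hmom _ (by omega) (by omega)

/-- For a complex random variable `X` with `E|X|^k ≤ 1/(N q^{k−2})` for all `2 ≤ k ≤ 2r`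
(`r ≥ 1`, `q ≥ 1`, `N ≥ 1`), one has
`E(|X|² − E|X|²)^r ≤ (1/(N q^{2r−2})) (1 + 2q²/N)^r`. -/
theorem stmt_13 {Ω : Type*} [MeasurableSpace Ω] (μ : Measure Ω) [IsProbabilityMeasure μ]
    (r : ℕ) (hr : 1 ≤ r) (q N : ℝ) (hq : 1 ≤ q) (hN : 1 ≤ N)
    (X : Ω → ℂ) (hmeas : Measurable X)
    (hintk : ∀ k, 2 ≤ k → k ≤ 2 * r → Integrable (fun ω => ‖X ω‖ ^ k) μ)
    (hmom : ∀ k, 2 ≤ k → k ≤ 2 * r →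
      ∫ ω, ‖X ω‖ ^ k ∂μ ≤ 1 / (N * q ^ (k - 2))) :
    ∫ ω, (‖X ω‖ ^ 2 - ∫ ω', ‖X ω'‖ ^ 2 ∂μ) ^ r ∂μ
      ≤ 1 / (N * q ^ (2 * r - 2)) * (1 + 2 * q ^ 2 / N) ^ r :=
  stmt_13_general μ r hr q N hq hN X hintk hmom
end

section
/- Let a_{ij} ∈ ℂ (1 ≤ i, j ≤ N) with max_i ((1/N)∑_j |a_{ij}|²)^{1/2} ≤ a, max_j ((1/N)∑_i |a_{ij}|²)^{1/2} ≤ a, and max_{i,j} |a_{ij}| ≤ A, where a ≤ A. Let G be a finite bipartite multigraph with r edges and k vertices, each vertex of degree at least 2, with vertex parts labeling row/column indices. Then val(G) := N^{−k} ∑_{s : V(G) → [N]} ∏_{{u,v} ∈ E(G)} |a_{s_u s_v}| ≤ A^{r−k} a^{k}. -/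
/-!
Fix the labels of the column vertices. The sum over the row labels then factorises over the row
vertices, and at a row vertex of degree `d ≥ 2` Cauchy–Schwarz on two of its edges, together
with the column `ℓ²` bound, gives at most `N a²`, while each of the other `d - 2` edges costs at
most `A`. With `p` row vertices this yields `val(G) ≤ A^(r-2p) a^(2p)`. Transposing the matrix if
necessary, the row side is the larger one, so `2p ≥ k`, and `a ≤ A` turns `A^(r-2p) a^(2p)` into
`A^(r-k) a^k`.
-/

open Finset

namespace Multiset

variable {α β : Type*} [Fintype β] [DecidableEq β]

lemma sum_filter_fiberwise (s : Multiset α) (g : α → β) :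
    ∑ b, s.filter (fun a => g a = b) = s := by
  classical
  refine ext.mpr fun a => ?_
  simp [count_sum', count_filter]

lemma card_eq_sum_card_filter (s : Multiset α) (g : α → β) :
    card s = ∑ b, card (s.filter (fun a => g a = b)) := by
  conv_lhs => rw [← s.sum_filter_fiberwise g]
  exact card_sum _ _

lemma prod_map_eq_prod_fiberwise {M : Type*} [CommMonoid M] (s : Multiset α) (g : α → β)
    (f : α → M) :
    (s.map f).prod = ∏ b, ((s.filter (fun a => g a = b)).map f).prod := by
  calc (s.map f).prod = ((∑ b, s.filter (fun a => g a = b)).map f).prod := by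
        rw [s.sum_filter_fiberwise g]
    _ = (∑ b, (s.filter (fun a => g a = b)).map f).prod :=
        congrArg prod (map_sum (mapAddMonoidHom f) _ _)
    _ = _ := prod_sum _ _

end Multiset

lemma pow_sub_mul_pow_le {R : Type*} [CommSemiring R] [PartialOrder R] [IsOrderedRing R]
    {x y : R} (hx : 0 ≤ x) (hxy : x ≤ y) {m n r : ℕ} (hmn : m ≤ n) (hnr : n ≤ r) :
    y ^ (r - n) * x ^ n ≤ y ^ (r - m) * x ^ m := by
  calc y ^ (r - n) * x ^ n = y ^ (r - n) * x ^ (n - m) * x ^ m := by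
        rw [mul_assoc, ← pow_add, Nat.sub_add_cancel hmn]
    _ ≤ y ^ (r - n) * y ^ (n - m) * x ^ m := by
        gcongr
        exact pow_nonneg (hx.trans hxy) _
    _ = y ^ (r - m) * x ^ m := by
        rw [← pow_add]
        congr 2
        omega

lemma le_mul_sq_of_sqrt_inv_mul_le {n : ℕ} (hn : 0 < n) {S x : ℝ} (h : √((1 / n) * S) ≤ x) :
    S ≤ n * x ^ 2 := by
  have := (Real.sqrt_le_iff.mp h).2
  rwa [one_div, inv_mul_le_iff₀ (by positivity)] at this

section EdgeProductSum

variable {ι κ U W : Type*}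

lemma sum_mul_le_of_sum_sq_le [Fintype ι] {f g : ι → ℝ} {C : ℝ} (hf : ∑ i, f i ^ 2 ≤ C)
    (hg : ∑ i, g i ^ 2 ≤ C) : ∑ i, f i * g i ≤ C := by
  have hC : 0 ≤ C := (sum_nonneg fun i _ => sq_nonneg (f i)).trans hf
  calc ∑ i, f i * g i ≤ √(∑ i, f i ^ 2) * √(∑ i, g i ^ 2) :=
        Real.sum_mul_le_sqrt_mul_sqrt _ _ _
    _ ≤ √C * √C := by gcongr
    _ = C := Real.mul_self_sqrt hC

lemma sum_prod_map_le_of_two_le_card [Fintype ι] {f : ι → κ → ℝ} {A C : ℝ} (hA : 0 ≤ A)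
    (hf0 : ∀ i j, 0 ≤ f i j) (hfA : ∀ i j, f i j ≤ A) (hcol : ∀ j, ∑ i, f i j ^ 2 ≤ C)
    {M : Multiset κ} (hM : 2 ≤ M.card) : ∑ i, (M.map (f i)).prod ≤ A ^ (M.card - 2) * C := by
  obtain ⟨j₁, hj₁⟩ := Multiset.card_pos_iff_exists_mem.mp (by omega : 0 < M.card)
  obtain ⟨M₁, rfl⟩ := Multiset.exists_cons_of_mem hj₁
  obtain ⟨j₂, hj₂⟩ := Multiset.card_pos_iff_exists_mem.mp
    (by rw [Multiset.card_cons] at hM; omega : 0 < M₁.card)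
  obtain ⟨M₂, rfl⟩ := Multiset.exists_cons_of_mem hj₂
  simp only [Multiset.map_cons, Multiset.prod_cons, Multiset.card_cons]
  have hrest : ∀ i, (M₂.map (f i)).prod ≤ A ^ M₂.card := fun i => by
    simpa using Multiset.prod_map_le_prod_map₀ (f i) (fun _ => A) (fun j _ => hf0 i j)
      (fun j _ => hfA i j)
  calc ∑ i, f i j₁ * (f i j₂ * (M₂.map (f i)).prod)
      ≤ ∑ i, A ^ M₂.card * (f i j₁ * f i j₂) := sum_le_sum fun i _ =>
        (le_of_eq (by ring)).trans
          (mul_le_mul_of_nonneg_right (hrest i) (mul_nonneg (hf0 i j₁) (hf0 i j₂)))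
    _ = A ^ M₂.card * ∑ i, f i j₁ * f i j₂ := (mul_sum _ _ _).symm
    _ ≤ A ^ M₂.card * C :=
        mul_le_mul_of_nonneg_left (sum_mul_le_of_sum_sq_le (hcol j₁) (hcol j₂)) (pow_nonneg hA _)

lemma sum_prod_map_eq_prod_sum [Fintype ι] [Fintype U] [DecidableEq U] (f : ι → κ → ℝ)
    (E : Multiset (U × W)) (sw : W → κ) :
    ∑ su : U → ι, (E.map fun e => f (su e.1) (sw e.2)).prod =
      ∏ u, ∑ i, ((E.filter (·.1 = u)).map fun e => f i (sw e.2)).prod := by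
  rw [Fintype.prod_sum]
  refine sum_congr rfl fun su _ => ?_
  rw [E.prod_map_eq_prod_fiberwise Prod.fst]
  refine prod_congr rfl fun u _ => congrArg _ (Multiset.map_congr rfl fun e he => ?_)
  rw [(Multiset.mem_filter.mp he).2]

lemma two_mul_card_le_card [Fintype U] [DecidableEq U] {E : Multiset (U × W)}
    (hdeg : ∀ u, 2 ≤ (E.filter (·.1 = u)).card) :
    2 * Fintype.card U ≤ E.card := by
  rw [E.card_eq_sum_card_filter Prod.fst, mul_comm, ← smul_eq_mul, ← card_univ, ← sum_const]
  exact sum_le_sum fun u _ => hdeg u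

variable [Fintype ι] [Fintype κ] [Fintype U] [Fintype W] [DecidableEq U] [DecidableEq W]

/-- For `f i j = |a i j|` this is `N ^ k • val(G)`; the vertices in `U` carry row labels, those
in `W` column labels. -/
def edgeProductSum (f : ι → κ → ℝ) (E : Multiset (U × W)) : ℝ :=
  ∑ su : U → ι, ∑ sw : W → κ, (E.map fun e => f (su e.1) (sw e.2)).prod

lemma edgeProductSum_swap (f : ι → κ → ℝ) (E : Multiset (U × W)) :
    edgeProductSum (fun j i => f i j) (E.map Prod.swap) = edgeProductSum f E := by
  rw [edgeProductSum, edgeProductSum, sum_comm]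
  simp only [Multiset.map_map, Function.comp_def, Prod.fst_swap, Prod.snd_swap]

lemma edgeProductSum_le {f : ι → κ → ℝ} {A C : ℝ} (hA : 0 ≤ A) (hf0 : ∀ i j, 0 ≤ f i j)
    (hfA : ∀ i j, f i j ≤ A) (hcol : ∀ j, ∑ i, f i j ^ 2 ≤ C) {E : Multiset (U × W)}
    (hdeg : ∀ u, 2 ≤ (E.filter (·.1 = u)).card) :
    edgeProductSum f E ≤ Fintype.card κ ^ Fintype.card W *
      (A ^ (E.card - 2 * Fintype.card U) * C ^ Fintype.card U) := by
  have hexp : ∑ u, ((E.filter (·.1 = u)).card - 2) = E.card - 2 * Fintype.card U := by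
    rw [sum_tsub_distrib _ fun u _ => hdeg u, ← E.card_eq_sum_card_filter Prod.fst, sum_const,
      card_univ, smul_eq_mul, mul_comm]
  rw [edgeProductSum, sum_comm]
  calc ∑ sw : W → κ, ∑ su : U → ι, (E.map fun e => f (su e.1) (sw e.2)).prod
      = ∑ sw : W → κ, ∏ u, ∑ i, ((E.filter (·.1 = u)).map fun e => f i (sw e.2)).prod :=
        sum_congr rfl fun sw _ => sum_prod_map_eq_prod_sum f E sw
    _ ≤ ∑ _sw : W → κ, ∏ u, A ^ ((E.filter (·.1 = u)).card - 2) * C := by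
        refine sum_le_sum fun sw _ => prod_le_prod (fun u _ => ?_) (fun u _ => ?_)
        · exact sum_nonneg fun i _ => Multiset.prod_map_nonneg fun e _ => hf0 _ _
        · simpa [Multiset.map_map, Function.comp_def] using
            sum_prod_map_le_of_two_le_card hA hf0 hfA hcol
              (M := (E.filter (·.1 = u)).map (sw ·.2)) (by simpa using hdeg u)
    _ = _ := by
        rw [sum_const, card_univ, Fintype.card_fun, prod_mul_distrib, prod_pow_eq_pow_sum, hexp,
          prod_const, card_univ, nsmul_eq_mul]
        push_cast
        ring

end EdgeProductSum

lemma edgeProductSum_le_of_card_le {N : ℕ} {U W : Type*} [Fintype U] [Fintype W] [DecidableEq U]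
    [DecidableEq W] {f : Fin N → Fin N → ℝ} {a A : ℝ} (ha : 0 ≤ a) (haA : a ≤ A)
    (hf0 : ∀ i j, 0 ≤ f i j) (hfA : ∀ i j, f i j ≤ A) (hcol : ∀ j, ∑ i, f i j ^ 2 ≤ N * a ^ 2)
    {E : Multiset (U × W)} (hdeg : ∀ u, 2 ≤ (E.filter (·.1 = u)).card)
    (hWU : Fintype.card W ≤ Fintype.card U) :
    edgeProductSum f E ≤ (N : ℝ) ^ (Fintype.card U + Fintype.card W) *
      (A ^ (E.card - (Fintype.card U + Fintype.card W)) *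
        a ^ (Fintype.card U + Fintype.card W)) := by
  calc edgeProductSum f E
      ≤ (N : ℝ) ^ Fintype.card W *
          (A ^ (E.card - 2 * Fintype.card U) * (N * a ^ 2) ^ Fintype.card U) := by
        simpa using edgeProductSum_le (ha.trans haA) hf0 hfA hcol hdeg
    _ = (N : ℝ) ^ (Fintype.card U + Fintype.card W) *
          (A ^ (E.card - 2 * Fintype.card U) * a ^ (2 * Fintype.card U)) := by ring
    _ ≤ _ := mul_le_mul_of_nonneg_left
        (pow_sub_mul_pow_le ha haA (by omega) (two_mul_card_le_card hdeg)) (by positivity)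

/-- Value bound for a bipartite multigraph: let `a_{ij}` have row/column `ℓ²` norms `≤ aa`
and entries `≤ AA` with `aa ≤ AA`. Let `G` be a finite bipartite multigraph with row-vertex
type `U`, column-vertex type `W`, edge multiset `E ⊆ U × W`, every vertex of degree `≥ 2`,
`r` edges, and `k = |U| + |W|` vertices. Then
`val(G) = N^{−k} ∑_{s} ∏_{(u,w) ∈ E} |a_{s(u) s(w)}| ≤ AA^{r−k} aa^k`. -/
theorem stmt_17 {N : ℕ} (hN : 0 < N)
    {U W : Type*} [Fintype U] [Fintype W] [DecidableEq U] [DecidableEq W]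
    (a : Fin N → Fin N → ℂ) (aa AA : ℝ) (haA : aa ≤ AA)
    (hrow : ∀ i, Real.sqrt ((1 / N) * ∑ j, ‖a i j‖ ^ 2) ≤ aa)
    (hcol : ∀ j, Real.sqrt ((1 / N) * ∑ i, ‖a i j‖ ^ 2) ≤ aa)
    (hent : ∀ i j, ‖a i j‖ ≤ AA)
    (E : Multiset (U × W))
    (hdegU : ∀ u : U, 2 ≤ Multiset.card (E.filter (fun e => e.1 = u)))
    (hdegW : ∀ w : W, 2 ≤ Multiset.card (E.filter (fun e => e.2 = w))) :
    (1 / (N : ℝ) ^ (Fintype.card U + Fintype.card W)) *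
        ∑ su : U → Fin N, ∑ sw : W → Fin N,
          (E.map (fun e => ‖a (su e.1) (sw e.2)‖)).prod
      ≤ AA ^ (Multiset.card E - (Fintype.card U + Fintype.card W)) *
          aa ^ (Fintype.card U + Fintype.card W) := by
  have haa : 0 ≤ aa := (Real.sqrt_le_iff.mp (hcol ⟨0, hN⟩)).1
  have hrow' : ∀ i, ∑ j, ‖a i j‖ ^ 2 ≤ N * aa ^ 2 := fun i =>
    le_mul_sq_of_sqrt_inv_mul_le hN (hrow i)
  have hcol' : ∀ j, ∑ i, ‖a i j‖ ^ 2 ≤ N * aa ^ 2 := fun j =>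
    le_mul_sq_of_sqrt_inv_mul_le hN (hcol j)
  have hbound : edgeProductSum (fun i j => ‖a i j‖) E ≤
      (N : ℝ) ^ (Fintype.card U + Fintype.card W) *
        (AA ^ (E.card - (Fintype.card U + Fintype.card W)) *
          aa ^ (Fintype.card U + Fintype.card W)) := by
    rcases le_total (Fintype.card W) (Fintype.card U) with hWU | hUW
    · exact edgeProductSum_le_of_card_le haa haA (fun _ _ => norm_nonneg _) hent hcol' hdegU hWU
    · have hdegW' : ∀ w, 2 ≤ ((E.map Prod.swap).filter (·.1 = w)).card := fun w => by
        simpa [Multiset.filter_map, Function.comp_def] using hdegW w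
      rw [← edgeProductSum_swap, add_comm (Fintype.card U)]
      simpa using edgeProductSum_le_of_card_le haa haA (fun _ _ => norm_nonneg _)
        (fun i j => hent j i) hrow' hdegW' hUW
  rw [one_div, inv_mul_le_iff₀ (by positivity)]
  exact hbound
end
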